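/- arXiv:1708.04071 — 7 statements merged into one kernel-verified Lean document; each statement's English description precedes it below -/
import Mathlib

section
/- Let n ≥ 6 and q ≥ 4 be integers, and let t = ⌈log₂ n⌉. Then for every a with 0 ≤ a ≤ n−1 and every b ∈ Z_q, the q-ary Varshamov–Tenengolts code VT_{a,b}(n) satisfies |VT_{a,b}(n)| ≥ (q−1)^{2t−5} · q^{n−3t+3}. -/
set_option maxHeartbeats 1000000


/-- VT syndrome of the auxiliary binary sequence of a q-ary sequence `s_0 ⋯ s_{n-1}`:
the auxiliary bit `α_i` (1 ≤ i ≤ n-1) is 1 iff `s_i ≥ s_{i-1}`, and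
`syn(A_S) = (∑ i, i · α_i) mod n`. -/
def qsyn {n q : ℕ} (S : Fin n → Fin q) : ℕ :=
  (∑ i : Fin (n - 1), (i.val + 1) *
    (if S ⟨i.val, by have := i.isLt; omega⟩ ≤ S ⟨i.val + 1, by have := i.isLt; omega⟩
      then 1 else 0)) % n

/-- Modular sum of a q-ary sequence: `sum(S) = (∑ i, s_i) mod q`. -/
def qsum {n q : ℕ} (S : Fin n → Fin q) : ℕ :=
  (∑ i : Fin n, (S i).val) % q

/-- The q-ary VT code `VT_{a,b}(n)`. -/
def VTq (n q : ℕ) (a b : ℕ) : Finset (Fin n → Fin q) :=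
  Finset.univ.filter fun S => qsyn S = a ∧ qsum S = b




lemma bits_sum : ∀ (B k : ℕ), k < 2^B → ∑ j ∈ Finset.range B, 2^j * (k / 2^j % 2) = k := by
  intro B
  induction B with
  | zero => intro k hk; interval_cases k; simp
  | succ B ih =>
    intro k hk
    rw [Finset.sum_range_succ']
    have h1 : ∀ j, 2^(j+1) * (k / 2^(j+1) % 2) = 2 * (2^j * ((k/2) / 2^j % 2)) := by
      intro j
      rw [Nat.div_div_eq_div_mul, mul_comm 2 (2^j), pow_succ]
      ring
    simp only [h1]
    rw [← Finset.mul_sum, ih (k/2) (by omega)]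
    simp
    omega

namespace VTAux


lemma pow8 {j : ℕ} (h : 3 ≤ j) : ∃ m, 1 ≤ m ∧ 2^j = 8*m := by
  refine ⟨2^(j-3), Nat.one_le_two_pow, ?_⟩
  have h2 : j = 3 + (j - 3) := by omega
  calc 2^j = 2^(3+(j-3)) := by rw [← h2]
  _ = 8 * 2^(j-3) := by rw [pow_add]; norm_num

lemma pow_inj {j j' : ℕ} (h : (2:ℕ)^j = 2^j') : j = j' :=
  Nat.pow_right_injective (by norm_num) h

lemma log2_pow (j : ℕ) : Nat.log 2 (2^j) = j := Nat.log_pow (by norm_num) j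

lemma log2_small {m : ℕ} (h1 : 1 ≤ m) (h2 : m ≤ 7) : Nat.log 2 m ≤ 2 := by
  have := Nat.log_lt_of_lt_pow (b := 2) (x := 3) (show m ≠ 0 by omega) (by omega)
  omega

-- slot detector logs
def lgx (i : ℕ) : ℕ := Nat.log 2 (i+1)
def lgg (i : ℕ) : ℕ := Nat.log 2 i
def lgy (i : ℕ) : ℕ := Nat.log 2 (i-1)

def Xs (J i : ℕ) : Prop := 3 ≤ lgx i ∧ lgx i ≤ J ∧ i = 2^(lgx i) - 1
def Gs (J i : ℕ) : Prop := 3 ≤ lgg i ∧ lgg i ≤ J ∧ i = 2^(lgg i)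
def Ys (J i : ℕ) : Prop := 3 ≤ lgy i ∧ lgy i ≤ J ∧ i = 2^(lgy i) + 1

instance (J i : ℕ) : Decidable (Xs J i) := by unfold Xs; infer_instance
instance (J i : ℕ) : Decidable (Gs J i) := by unfold Gs; infer_instance
instance (J i : ℕ) : Decidable (Ys J i) := by unfold Ys; infer_instance

lemma Xs_iff {J i : ℕ} : Xs J i ↔ ∃ j, (3 ≤ j ∧ j ≤ J) ∧ i = 2^j - 1 := by
  constructor
  · rintro ⟨h1, h2, h3⟩; exact ⟨lgx i, ⟨h1, h2⟩, h3⟩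
  · rintro ⟨j, ⟨h1, h2⟩, rfl⟩
    have hp : (1:ℕ) ≤ 2^j := Nat.one_le_two_pow
    have hl : lgx (2^j - 1) = j := by
      unfold lgx; rw [show 2^j - 1 + 1 = 2^j by omega, log2_pow]
    exact ⟨by omega, by omega, by rw [hl]⟩

lemma Gs_iff {J i : ℕ} : Gs J i ↔ ∃ j, (3 ≤ j ∧ j ≤ J) ∧ i = 2^j := by
  constructor
  · rintro ⟨h1, h2, h3⟩; exact ⟨lgg i, ⟨h1, h2⟩, h3⟩
  · rintro ⟨j, ⟨h1, h2⟩, rfl⟩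
    have hl : lgg (2^j) = j := log2_pow j
    exact ⟨by omega, by omega, by rw [hl]⟩

lemma Ys_iff {J i : ℕ} : Ys J i ↔ ∃ j, (3 ≤ j ∧ j ≤ J) ∧ i = 2^j + 1 := by
  constructor
  · rintro ⟨h1, h2, h3⟩; exact ⟨lgy i, ⟨h1, h2⟩, h3⟩
  · rintro ⟨j, ⟨h1, h2⟩, rfl⟩
    have hl : lgy (2^j + 1) = j := by unfold lgy; simp [log2_pow]
    exact ⟨by omega, by omega, by rw [hl]⟩

lemma small_not_slot {J i : ℕ} (h : i ≤ 6) : ¬ Xs J i ∧ ¬ Gs J i ∧ ¬ Ys J i := by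
  refine ⟨?_, ?_, ?_⟩
  · rintro ⟨h1, -, -⟩
    have : lgx i ≤ 2 := log2_small (by omega) (by omega)
    omega
  · rintro ⟨h1, -, h3⟩
    have hi : 1 ≤ i := by
      rcases Nat.eq_zero_or_pos i with h0 | h0
      · exfalso; rw [h0] at h3; have : (1:ℕ) ≤ 2 ^ lgg 0 := Nat.one_le_two_pow; omega
      · exact h0
    have : lgg i ≤ 2 := log2_small (by omega) (by omega)
    omega
  · rintro ⟨h1, -, h3⟩
    have hi : 2 ≤ i := by
      have : (1:ℕ) ≤ 2 ^ lgy i := Nat.one_le_two_pow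
      omega
    have : lgy i ≤ 2 := log2_small (by omega) (by omega)
    omega

lemma Xs_pow {J j : ℕ} (h1 : 3 ≤ j) (h2 : j ≤ J) : Xs J (2^j - 1) :=
  Xs_iff.2 ⟨j, ⟨h1, h2⟩, rfl⟩
lemma Gs_pow {J j : ℕ} (h1 : 3 ≤ j) (h2 : j ≤ J) : Gs J (2^j) :=
  Gs_iff.2 ⟨j, ⟨h1, h2⟩, rfl⟩
lemma Ys_pow {J j : ℕ} (h1 : 3 ≤ j) (h2 : j ≤ J) : Ys J (2^j + 1) :=
  Ys_iff.2 ⟨j, ⟨h1, h2⟩, rfl⟩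

-- cross-falsity: a power slot value is in only one class
lemma not_Xs_pow {J j : ℕ} (h1 : 3 ≤ j) : ¬ Xs J (2^j) := by
  rw [Xs_iff]
  rintro ⟨j', ⟨h1', -⟩, he⟩
  obtain ⟨m, hm, hp⟩ := pow8 h1
  obtain ⟨m', hm', hp'⟩ := pow8 h1'
  omega
lemma not_Xs_pow1 {J j : ℕ} (h1 : 3 ≤ j) : ¬ Xs J (2^j + 1) := by
  rw [Xs_iff]
  rintro ⟨j', ⟨h1', -⟩, he⟩
  obtain ⟨m, hm, hp⟩ := pow8 h1
  obtain ⟨m', hm', hp'⟩ := pow8 h1'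
  omega
lemma not_Gs_pow1 {J j : ℕ} (h1 : 3 ≤ j) : ¬ Gs J (2^j + 1) := by
  rw [Gs_iff]
  rintro ⟨j', ⟨h1', -⟩, he⟩
  obtain ⟨m, hm, hp⟩ := pow8 h1
  obtain ⟨m', hm', hp'⟩ := pow8 h1'
  omega


section defs

variable {n q : ℕ}

def nf (f : Fin n → Fin q) (i : ℕ) : ℕ := if h : i < n then (f ⟨i, h⟩).val else 0

def xv (f : Fin n → Fin q) (j : ℕ) : ℕ := nf f (2^j - 1) + 1

def yv (f : Fin n → Fin q) (j : ℕ) : ℕ :=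
  if nf f (2^j + 1) + 1 < xv f j then nf f (2^j + 1) else nf f (2^j + 1) + 1

def dv (f : Fin n → Fin q) (J i : ℕ) : ℕ :=
  if i = 1 then q - 1
  else if Xs J i then xv f (lgx i)
  else if Gs J i then xv f (lgg i)
  else if Ys J i then yv f (lgy i)
  else nf f i

def cg2 (q τ : ℕ) : ℕ :=
  if τ = 4 then 1 else if τ = 5 then 2 else if τ = 6 then q-1 else if τ = 7 then q-1
  else if τ = 8 then 0 else if τ = 9 then 1 else if τ = 10 then q-1 else if τ = 11 then q-1 else 0

def cg3 (q τ : ℕ) : ℕ :=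
  if τ = 5 then 1 else if τ = 7 then 1 else if τ = 8 then 1 else if τ = 10 then q-1 else 0

def cg4 (q τ : ℕ) : ℕ := if τ = 4 then q-1 else if τ = 6 then q-1 else 0

def CW (J : ℕ) : Finset ℕ := {2,3,4,5} ∪ (Finset.Icc 3 J).image (2 ^ ·)

def Kv (f : Fin n → Fin q) (J : ℕ) : ℕ :=
  ∑ w ∈ Finset.Ico 1 n \ CW J, w * (if dv f J (w-1) ≤ dv f J w then 1 else 0)

def ρv (f : Fin n → Fin q) (J a : ℕ) : ℕ := (a + (n - Kv f J % n)) % n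

def sv (f : Fin n → Fin q) (J a : ℕ) : ℕ :=
  if ρv f J a < 4 then ρv f J a + n else ρv f J a

def τv (f : Fin n → Fin q) (J a : ℕ) : ℕ :=
  if sv f J a ≤ 12 then sv f J a
  else sv f J a % 8 + (if sv f J a % 8 < 5 then 8 else 0)

def kv (f : Fin n → Fin q) (J a : ℕ) : ℕ := (sv f J a - τv f J a) / 8

def bgv (f : Fin n → Fin q) (J a j : ℕ) : ℕ :=
  if kv f J a / 2^(j-3) % 2 = 1 then xv f j
  else if xv f j ≤ yv f j then 0 else yv f j + 1

def gvP (f : Fin n → Fin q) (J a : ℕ) (i : ℕ) : ℕ :=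
  if i = 1 then q - 1
  else if i = 2 then cg2 q (τv f J a)
  else if i = 3 then cg3 q (τv f J a)
  else if i = 4 then cg4 q (τv f J a)
  else if Gs J i then bgv f J a (lgg i)
  else dv f J i

def restS (f : Fin n → Fin q) (J a : ℕ) : ℕ := ∑ i ∈ Finset.Ico 1 n, gvP f J a i

def zv (f : Fin n → Fin q) (J a b : ℕ) : ℕ := (b + (q - restS f J a % q)) % q

def gv (f : Fin n → Fin q) (J a b : ℕ) (i : ℕ) : ℕ :=
  if i = 0 then zv f J a b else gvP f J a i

def enc (hq : 0 < q) (f : Fin n → Fin q) (J a b : ℕ) : Fin n → Fin q :=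
  fun i => ⟨gv f J a b i.val % q, Nat.mod_lt _ hq⟩

end defs

end VTAux
namespace VTAux
section evals
variable {n q : ℕ} (f : Fin n → Fin q) (J a b : ℕ)

lemma lgx_pow {j : ℕ} (h : 1 ≤ j) : lgx (2^j - 1) = j := by
  have hp : (1:ℕ) ≤ 2^j := Nat.one_le_two_pow
  unfold lgx; rw [show 2^j - 1 + 1 = 2^j by omega, log2_pow]

lemma lgy_pow (j : ℕ) : lgy (2^j + 1) = j := by
  unfold lgy; simp [log2_pow]

lemma lgg_pow (j : ℕ) : lgg (2^j) = j := log2_pow j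

lemma nf_lt (hq : 0 < q) (i : ℕ) : nf f i < q := by
  unfold nf; split
  · exact (f _).isLt
  · exact hq

lemma dv_1 : dv f J 1 = q - 1 := by simp [dv]

lemma dv_x {j : ℕ} (h1 : 3 ≤ j) (h2 : j ≤ J) : dv f J (2^j - 1) = xv f j := by
  obtain ⟨m, hm, hp⟩ := pow8 h1
  unfold dv
  rw [if_neg (by omega), if_pos (Xs_pow h1 h2), lgx_pow (by omega)]

lemma dv_g {j : ℕ} (h1 : 3 ≤ j) (h2 : j ≤ J) : dv f J (2^j) = xv f j := by
  obtain ⟨m, hm, hp⟩ := pow8 h1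
  unfold dv
  rw [if_neg (by omega), if_neg (not_Xs_pow h1), if_pos (Gs_pow h1 h2), lgg_pow]

lemma dv_y {j : ℕ} (h1 : 3 ≤ j) (h2 : j ≤ J) : dv f J (2^j + 1) = yv f j := by
  obtain ⟨m, hm, hp⟩ := pow8 h1
  unfold dv
  rw [if_neg (by omega), if_neg (not_Xs_pow1 h1), if_neg (not_Gs_pow1 h1),
    if_pos (Ys_pow h1 h2), lgy_pow]

lemma dv_other {i : ℕ} (h1 : i ≠ 1) (hx : ¬ Xs J i) (hg : ¬ Gs J i) (hy : ¬ Ys J i) :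
    dv f J i = nf f i := by
  unfold dv; rw [if_neg h1, if_neg hx, if_neg hg, if_neg hy]

lemma gvP_1 : gvP f J a 1 = q - 1 := by simp [gvP]
lemma gvP_2 : gvP f J a 2 = cg2 q (τv f J a) := by simp [gvP]
lemma gvP_3 : gvP f J a 3 = cg3 q (τv f J a) := by simp [gvP]
lemma gvP_4 : gvP f J a 4 = cg4 q (τv f J a) := by simp [gvP]

lemma gvP_5 : gvP f J a 5 = nf f 5 := by
  obtain ⟨hx, hg, hy⟩ := small_not_slot (J := J) (i := 5) (by omega)
  unfold gvP
  rw [if_neg (by omega), if_neg (by omega), if_neg (by omega), if_neg (by omega), if_neg hg]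
  exact dv_other f J (by omega) hx hg hy

lemma gvP_g {j : ℕ} (h1 : 3 ≤ j) (h2 : j ≤ J) : gvP f J a (2^j) = bgv f J a j := by
  obtain ⟨m, hm, hp⟩ := pow8 h1
  unfold gvP
  rw [if_neg (by omega), if_neg (by omega), if_neg (by omega), if_neg (by omega),
    if_pos (Gs_pow h1 h2), lgg_pow]

lemma gvP_eq_dv {i : ℕ} (h2 : i ≠ 2) (h3 : i ≠ 3) (h4 : i ≠ 4) (hg : ¬ Gs J i) :
    gvP f J a i = dv f J i := by
  by_cases h1 : i = 1
  · subst h1; rw [gvP_1, dv_1]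
  · unfold gvP; rw [if_neg h1, if_neg h2, if_neg h3, if_neg h4, if_neg hg]

lemma gv_pos (i : ℕ) (h : i ≠ 0) : gv f J a b i = gvP f J a i := by
  unfold gv; rw [if_neg h]

-- value bounds
lemma xv_ge : 1 ≤ xv f j := by unfold xv; omega

lemma xv_le {j : ℕ} (hq : 2 ≤ q) (h : nf f (2^j - 1) ≤ q - 2) : xv f j ≤ q - 1 := by
  unfold xv; omega

lemma yv_le {j : ℕ} (hq : 2 ≤ q) (h : nf f (2^j + 1) ≤ q - 2) : yv f j ≤ q - 1 := by
  unfold yv; split <;> omega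

lemma xv_ne : xv f j ≠ yv f j + 1 := by
  unfold yv; split <;> omega

lemma cg2_le (hq : 3 ≤ q) (τ : ℕ) : cg2 q τ ≤ q - 1 := by
  unfold cg2; split_ifs <;> omega
lemma cg3_le (hq : 3 ≤ q) (τ : ℕ) : cg3 q τ ≤ q - 1 := by
  unfold cg3; split_ifs <;> omega
lemma cg4_le (hq : 3 ≤ q) (τ : ℕ) : cg4 q τ ≤ q - 1 := by
  unfold cg4; split_ifs <;> omega

lemma bgv_le {j : ℕ} (hq : 2 ≤ q) (hx : nf f (2^j - 1) ≤ q - 2) (hy : nf f (2^j + 1) ≤ q - 2) :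
    bgv f J a j ≤ q - 1 := by
  have h1 := xv_le f (j := j) hq hx
  have h2 := yv_le f (j := j) hq hy
  unfold bgv; split_ifs <;> omega

lemma block_bit {j : ℕ} : (if xv f j ≤ bgv f J a j then 1 else 0) = kv f J a / 2^(j-3) % 2 := by
  have hne := xv_ne f (j := j)
  have hge := xv_ge f (j := j)
  by_cases hc : kv f J a / 2^(j-3) % 2 = 1
  · rw [hc]; unfold bgv; rw [if_pos hc, if_pos le_rfl]
  · have hc0 : kv f J a / 2^(j-3) % 2 = 0 := by omega
    rw [hc0]; unfold bgv; rw [if_neg hc]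
    split_ifs with h1 h2 h3 <;> omega

lemma block_eps {j : ℕ} :
    (if bgv f J a j ≤ yv f j then 1 else 0) = (if xv f j ≤ yv f j then 1 else 0) := by
  have hne := xv_ne f (j := j)
  unfold bgv
  split_ifs with h1 h2 h3 h2 h3 <;> omega

end evals
end VTAux
namespace VTAux
section core
variable {n q : ℕ} (f : Fin n → Fin q) (J a b : ℕ)

lemma cover (hn : 6 ≤ n) (ha : a < n) (hJ : 2 ≤ J)
    (hcov : n ≤ 8 * 2^(J-2) ∨ n = 8 * 2^(J-2) + 1) :
    4 ≤ τv f J a ∧ τv f J a ≤ 12 ∧ τv f J a + 8 * kv f J a = sv f J a ∧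
      sv f J a % n = ρv f J a ∧ kv f J a < 2^(J-2) := by
  have hn0 : 0 < n := by omega
  have hρ : ρv f J a < n := Nat.mod_lt _ hn0
  have hM : 1 ≤ 2^(J-2) := Nat.one_le_two_pow
  have hs4 : 4 ≤ sv f J a ∧ sv f J a % n = ρv f J a ∧ sv f J a ≤ n + 3 := by
    unfold sv; split_ifs with h
    · refine ⟨by omega, by rw [Nat.add_mod_right]; exact Nat.mod_eq_of_lt hρ, by omega⟩
    · exact ⟨by omega, Nat.mod_eq_of_lt hρ, by omega⟩
  obtain ⟨h4, hmod, hn3⟩ := hs4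
  have hτ : (sv f J a ≤ 12 ∧ τv f J a = sv f J a) ∨
      (12 < sv f J a ∧ τv f J a % 8 = sv f J a % 8 ∧ 5 ≤ τv f J a ∧ τv f J a ≤ 12) := by
    unfold τv; split_ifs with h1 h2
    · exact Or.inl ⟨h1, rfl⟩
    · exact Or.inr ⟨by omega, by omega, by omega, by omega⟩
    · exact Or.inr ⟨by omega, by omega, by omega, by omega⟩
  have hkd : 8 * kv f J a = sv f J a - τv f J a := by
    unfold kv; rcases hτ with ⟨h0, h⟩ | ⟨h1, h2, h3, h4'⟩ <;> omega
  rcases hτ with ⟨h0, h⟩ | ⟨h1, h2, h3, h4'⟩ <;>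
    rcases hcov with hc | hc <;>
      exact ⟨by omega, by omega, by omega, hmod, by omega⟩

lemma chain_sum (hq : 4 ≤ q) (hy : nf f 5 ≤ q - 2) (h4 : 4 ≤ τv f J a) (h12 : τv f J a ≤ 12) :
    2 * (if (q-1:ℕ) ≤ cg2 q (τv f J a) then 1 else 0)
  + 3 * (if cg2 q (τv f J a) ≤ cg3 q (τv f J a) then 1 else 0)
  + 4 * (if cg3 q (τv f J a) ≤ cg4 q (τv f J a) then 1 else 0)
  + 5 * (if cg4 q (τv f J a) ≤ nf f 5 then 1 else 0) = τv f J a := by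
  set τ := τv f J a with hτ
  clear_value τ
  interval_cases τ <;>
    simp only [cg2, cg3, cg4] <;> norm_num <;>
      first
        | omega
        | (split_ifs <;> omega)

lemma gv_lt (hq : 4 ≤ q)
    (hPx : ∀ j, 3 ≤ j → j ≤ J → nf f (2^j - 1) ≤ q - 2 ∧ nf f (2^j + 1) ≤ q - 2) :
    ∀ i, gv f J a b i < q := by
  intro i
  have hnf : ∀ m, nf f m < q := nf_lt f (by omega)
  unfold gv
  split
  · exact Nat.mod_lt _ (by omega)
  unfold gvP
  split_ifs with h1 h2 h3 h4 h5
  · omega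
  · have := cg2_le (q := q) (by omega) (τv f J a); omega
  · have := cg3_le (q := q) (by omega) (τv f J a); omega
  · have := cg4_le (q := q) (by omega) (τv f J a); omega
  · obtain ⟨hg1, hg2, -⟩ := h5
    obtain ⟨hx, hy⟩ := hPx (lgg i) hg1 hg2
    have := bgv_le f J a (j := lgg i) (by omega) hx hy
    omega
  · unfold dv
    split_ifs with d1 d2
    · obtain ⟨e1, e2, -⟩ := d1
      have hb := (hPx _ e1 e2).1
      have := xv_le f (j := lgx i) (by omega) hb
      omega
    · obtain ⟨e1, e2, -⟩ := d2
      have hb := (hPx _ e1 e2).2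
      have := yv_le f (j := lgy i) (by omega) hb
      omega
    · exact hnf i

end core
end VTAux
namespace VTAux
section sums
variable {n q : ℕ} (f : Fin n → Fin q) (J a b : ℕ)

lemma not_Gs_powm1 {J j : ℕ} (h1 : 3 ≤ j) : ¬ Gs J (2^j - 1) := by
  rw [Gs_iff]
  rintro ⟨j', ⟨h1', -⟩, he⟩
  obtain ⟨m, hm, hp⟩ := pow8 h1
  obtain ⟨m', hm', hp'⟩ := pow8 h1'
  omega

lemma CW_sub (hn : 6 ≤ n) (hJn : 2^J + 2 ≤ n) : CW J ⊆ Finset.Ico 1 n := by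
  intro w hw
  rw [CW, Finset.mem_union] at hw
  rcases hw with hw | hw
  · fin_cases hw <;> (rw [Finset.mem_Ico]; omega)
  · obtain ⟨j, hj, rfl⟩ := Finset.mem_image.1 hw
    rw [Finset.mem_Icc] at hj
    have : 2^j ≤ 2^J := Nat.pow_le_pow_right (by norm_num) hj.2
    rw [Finset.mem_Ico]
    have : (1:ℕ) ≤ 2^j := Nat.one_le_two_pow
    omega

lemma mem_CW_small {w : ℕ} (h : w = 2 ∨ w = 3 ∨ w = 4 ∨ w = 5) : w ∈ CW J := by
  rw [CW, Finset.mem_union]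
  left
  rcases h with rfl | rfl | rfl | rfl <;> decide

lemma mem_CW_pow {j : ℕ} (h1 : 3 ≤ j) (h2 : j ≤ J) : 2^j ∈ CW J := by
  rw [CW, Finset.mem_union]
  exact Or.inr (Finset.mem_image.2 ⟨j, Finset.mem_Icc.2 ⟨h1, h2⟩, rfl⟩)

lemma gv_eq_dv {i : ℕ} (h0 : i ≠ 0) (h2 : i ≠ 2) (h3 : i ≠ 3) (h4 : i ≠ 4)
    (hg : ¬ Gs J i) : gv f J a b i = dv f J i := by
  rw [gv_pos f J a b i h0]
  exact gvP_eq_dv f J a h2 h3 h4 hg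

-- the K-part: off-CW weights agree with the data proxy
lemma offCW_term (hn : 6 ≤ n) (hq : 4 ≤ q) {w : ℕ} (hw1 : 1 ≤ w) (hwn : w < n)
    (hw : w ∉ CW J) :
    (if gv f J a b (w-1) ≤ gv f J a b w then (1:ℕ) else 0)
      = (if dv f J (w-1) ≤ dv f J w then (1:ℕ) else 0) := by
  by_cases hw1' : w = 1
  · subst hw1'
    have hz : gv f J a b 0 = zv f J a b := by simp [gv]
    have hg1 : gv f J a b 1 = q - 1 := by rw [gv_pos f J a b 1 (by omega), gvP_1]
    have hzlt : zv f J a b < q := Nat.mod_lt _ (by omega)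
    have hd0 : dv f J 0 < q := by
      obtain ⟨hx, hg, hy⟩ := small_not_slot (J := J) (i := 0) (by omega)
      rw [dv_other f J (by omega) hx hg hy]
      exact nf_lt f (by omega) 0
    rw [show (1:ℕ) - 1 = 0 from rfl, hz, hg1, dv_1]
    rw [if_pos (by omega), if_pos (by omega)]
  · -- w ≥ 2
    by_cases hy : Ys J w
    · -- w = 2^j + 1 with j = lgy w
      obtain ⟨e1, e2, e3⟩ := hy
      obtain ⟨m, hm, hp⟩ := pow8 e1
      set j := lgy w with hj
      have hxm1 : w - 1 = 2^j := by omega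
      have hgw1 : gv f J a b (w-1) = bgv f J a j := by
        rw [hxm1, gv_pos f J a b _ (by omega), gvP_g f J a e1 e2]
      have hgw : gv f J a b w = yv f j := by
        rw [e3, gv_pos f J a b _ (by omega)]
        rw [gvP_eq_dv f J a (by omega) (by omega) (by omega) (not_Gs_pow1 e1)]
        exact dv_y f J e1 e2
      have hdw1 : dv f J (w-1) = xv f j := by rw [hxm1]; exact dv_g f J e1 e2
      have hdw : dv f J w = yv f j := by rw [e3]; exact dv_y f J e1 e2
      rw [hgw1, hgw, hdw1, hdw]
      exact block_eps f J a
    · -- generic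
      have hwg : ¬ Gs J w := by
        intro hg
        obtain ⟨e1, e2, e3⟩ := hg
        exact hw (e3 ▸ mem_CW_pow J e1 e2)
      have hw2345 : w ≠ 2 ∧ w ≠ 3 ∧ w ≠ 4 ∧ w ≠ 5 := by
        refine ⟨?_, ?_, ?_, ?_⟩ <;> (intro he; exact hw (mem_CW_small J (by omega)))
      have hwm1g : ¬ Gs J (w-1) := by
        intro hg
        rw [Gs_iff] at hg
        obtain ⟨j, ⟨e1, e2⟩, e3⟩ := hg
        have : w = 2^j + 1 := by
          have : (1:ℕ) ≤ 2^j := Nat.one_le_two_pow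
          omega
        exact hy (this ▸ Ys_pow e1 e2)
      have h1 : gv f J a b (w-1) = dv f J (w-1) := by
        refine gv_eq_dv f J a b (by omega) ?_ ?_ ?_ hwm1g <;> omega
      have h2' : gv f J a b w = dv f J w := by
        refine gv_eq_dv f J a b (by omega) ?_ ?_ ?_ hwg <;> omega
      rw [h1, h2']

lemma sum_offCW (hn : 6 ≤ n) (hq : 4 ≤ q) :
    ∑ w ∈ Finset.Ico 1 n \ CW J, w * (if gv f J a b (w-1) ≤ gv f J a b w then 1 else 0)
      = Kv f J := by
  unfold Kv
  refine Finset.sum_congr rfl ?_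
  intro w hw
  rw [Finset.mem_sdiff, Finset.mem_Ico] at hw
  rw [offCW_term f J a b hn hq hw.1.1 hw.1.2 hw.2]

-- chain part
lemma sum_chain (hn : 6 ≤ n) (hq : 4 ≤ q) (h5 : nf f 5 ≤ q - 2)
    (h4 : 4 ≤ τv f J a) (h12 : τv f J a ≤ 12) :
    ∑ w ∈ ({2,3,4,5} : Finset ℕ), w * (if gv f J a b (w-1) ≤ gv f J a b w then 1 else 0)
      = τv f J a := by
  have e1 : gv f J a b 1 = q - 1 := by rw [gv_pos f J a b 1 (by omega), gvP_1]
  have e2 : gv f J a b 2 = cg2 q (τv f J a) := by rw [gv_pos f J a b 2 (by omega), gvP_2]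
  have e3 : gv f J a b 3 = cg3 q (τv f J a) := by rw [gv_pos f J a b 3 (by omega), gvP_3]
  have e4 : gv f J a b 4 = cg4 q (τv f J a) := by rw [gv_pos f J a b 4 (by omega), gvP_4]
  have e5 : gv f J a b 5 = nf f 5 := by rw [gv_pos f J a b 5 (by omega), gvP_5]
  rw [show ({2,3,4,5} : Finset ℕ) = insert 2 (insert 3 (insert 4 ({5} : Finset ℕ))) from rfl]
  rw [Finset.sum_insert (by decide), Finset.sum_insert (by decide),
    Finset.sum_insert (by decide), Finset.sum_singleton]
  simp only [show (2:ℕ)-1 = 1 from rfl, show (3:ℕ)-1 = 2 from rfl,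
    show (4:ℕ)-1 = 3 from rfl, show (5:ℕ)-1 = 4 from rfl]
  rw [e1, e2, e3, e4, e5]
  have := chain_sum f J a hq h5 h4 h12
  omega

-- block part
lemma sum_blocks (hn : 6 ≤ n) (hq : 4 ≤ q) (hJ : 2 ≤ J) (hkv : kv f J a < 2^(J-2)) :
    ∑ w ∈ (Finset.Icc 3 J).image (2 ^ ·),
        w * (if gv f J a b (w-1) ≤ gv f J a b w then 1 else 0)
      = 8 * kv f J a := by
  rw [Finset.sum_image (by intro x _ y _ h; exact pow_inj h)]
  have hterm : ∀ j ∈ Finset.Icc 3 J,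
      2^j * (if gv f J a b (2^j-1) ≤ gv f J a b (2^j) then (1:ℕ) else 0)
        = 2^j * (kv f J a / 2^(j-3) % 2) := by
    intro j hj
    rw [Finset.mem_Icc] at hj
    obtain ⟨m, hm, hp⟩ := pow8 hj.1
    have hg1 : gv f J a b (2^j - 1) = xv f j := by
      rw [gv_pos f J a b _ (by omega)]
      rw [gvP_eq_dv f J a (by omega) (by omega) (by omega) (not_Gs_powm1 hj.1)]
      exact dv_x f J hj.1 hj.2
    have hg2 : gv f J a b (2^j) = bgv f J a j := by
      rw [gv_pos f J a b _ (by omega), gvP_g f J a hj.1 hj.2]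
    rw [hg1, hg2, block_bit f J a]
  rw [Finset.sum_congr rfl hterm]
  rw [← Finset.Ico_add_one_right_eq_Icc, Finset.sum_Ico_eq_sum_range]
  have hre : ∀ i, 2^(3+i) * (kv f J a / 2^(3+i-3) % 2) = 8 * (2^i * (kv f J a / 2^i % 2)) := by
    intro i
    rw [show 3 + i - 3 = i by omega, pow_add]
    ring
  rw [Finset.sum_congr rfl (fun i _ => hre i), ← Finset.mul_sum]
  rw [show J + 1 - 3 = J - 2 by omega]
  rw [bits_sum (J-2) (kv f J a) hkv]

lemma sum_total (hn : 6 ≤ n) (hq : 4 ≤ q) (hJ : 2 ≤ J) (hJn : 2^J + 2 ≤ n)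
    (h5 : nf f 5 ≤ q - 2) (h4 : 4 ≤ τv f J a) (h12 : τv f J a ≤ 12)
    (hkv : kv f J a < 2^(J-2)) :
    ∑ w ∈ Finset.Ico 1 n, w * (if gv f J a b (w-1) ≤ gv f J a b w then 1 else 0)
      = Kv f J + (τv f J a + 8 * kv f J a) := by
  rw [← Finset.sum_sdiff (CW_sub J hn hJn)]
  rw [sum_offCW f J a b hn hq]
  congr 1
  rw [CW]
  rw [Finset.sum_union ?hdisj]
  case hdisj =>
    rw [Finset.disjoint_right]
    intro x hx hx'
    obtain ⟨j, hj, rfl⟩ := Finset.mem_image.1 hx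
    rw [Finset.mem_Icc] at hj
    obtain ⟨m, hm, hp⟩ := pow8 hj.1
    simp only [Finset.mem_insert, Finset.mem_singleton] at hx'
    omega
  rw [sum_chain f J a b hn hq h5 h4 h12, sum_blocks f J a b hn hq hJ hkv]

end sums
end VTAux
namespace VTAux
section final
variable {n q : ℕ} (f : Fin n → Fin q) (J a b : ℕ)

lemma qsyn_enc (hq0 : 0 < q) (hn : 6 ≤ n) (hq : 4 ≤ q) (hJ : 2 ≤ J) (hJn : 2^J + 2 ≤ n)
    (ha : a < n)
    (hcov : n ≤ 8 * 2^(J-2) ∨ n = 8 * 2^(J-2) + 1)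
    (h5 : nf f 5 ≤ q - 2)
    (hPx : ∀ j, 3 ≤ j → j ≤ J → nf f (2^j - 1) ≤ q - 2 ∧ nf f (2^j + 1) ≤ q - 2) :
    qsyn (enc hq0 f J a b) = a := by
  obtain ⟨h4, h12, hks, hsmod, hkv⟩ := cover f J a hn ha hJ hcov
  have hglt : ∀ i, gv f J a b i < q := gv_lt f J a b hq hPx
  have hmodq : ∀ i, gv f J a b i % q = gv f J a b i := fun i => Nat.mod_eq_of_lt (hglt i)
  unfold qsyn
  simp only [enc, Fin.mk_le_mk, hmodq]
  rw [Fin.sum_univ_eq_sum_range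
    (fun w => (w + 1) * if gv f J a b w ≤ gv f J a b (w+1) then 1 else 0) (n-1)]
  have hIco : ∑ w ∈ Finset.Ico 1 n, w * (if gv f J a b (w-1) ≤ gv f J a b w then 1 else 0)
      = ∑ i ∈ Finset.range (n-1),
          (i + 1) * (if gv f J a b i ≤ gv f J a b (i+1) then 1 else 0) := by
    rw [Finset.sum_Ico_eq_sum_range]
    apply Finset.sum_congr rfl
    intro i _
    rw [show 1 + i - 1 = i by omega, Nat.add_comm 1 i]
  rw [← hIco, sum_total f J a b hn hq hJ hJn h5 h4 h12 hkv]
  have hKn : Kv f J % n < n := Nat.mod_lt _ (by omega)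
  calc (Kv f J + (τv f J a + 8 * kv f J a)) % n
      = (Kv f J + sv f J a) % n := by rw [hks]
    _ = (Kv f J % n + sv f J a % n) % n := by rw [Nat.add_mod]
    _ = (Kv f J % n + ρv f J a) % n := by rw [hsmod]
    _ = (Kv f J % n + (a + (n - Kv f J % n)) % n) % n := by unfold ρv; rfl
    _ = (Kv f J % n + (a + (n - Kv f J % n))) % n := by rw [Nat.add_mod_mod]
    _ = (a + n) % n := by
        have he : Kv f J % n + (a + (n - Kv f J % n)) = a + n := by omega
        rw [he]
    _ = a := by rw [Nat.add_mod_right]; exact Nat.mod_eq_of_lt ha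

lemma qsum_enc (hq0 : 0 < q) (hn : 6 ≤ n) (hq : 4 ≤ q) (hb : b < q)
    (hPx : ∀ j, 3 ≤ j → j ≤ J → nf f (2^j - 1) ≤ q - 2 ∧ nf f (2^j + 1) ≤ q - 2) :
    qsum (enc hq0 f J a b) = b := by
  have hglt : ∀ i, gv f J a b i < q := gv_lt f J a b hq hPx
  have hmodq : ∀ i, gv f J a b i % q = gv f J a b i := fun i => Nat.mod_eq_of_lt (hglt i)
  unfold qsum
  simp only [enc, hmodq]
  rw [Fin.sum_univ_eq_sum_range (fun w => gv f J a b w) n]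
  rw [Finset.sum_eq_sum_sdiff_singleton_add (Finset.mem_range.2 (by omega : 0 < n))]
  have hset : Finset.range n \ {0} = Finset.Ico 1 n := by
    ext x
    simp only [Finset.mem_sdiff, Finset.mem_range, Finset.mem_singleton, Finset.mem_Ico]
    omega
  rw [hset]
  have hrest : ∑ w ∈ Finset.Ico 1 n, gv f J a b w = restS f J a := by
    unfold restS
    apply Finset.sum_congr rfl
    intro w hw
    rw [Finset.mem_Ico] at hw
    exact gv_pos f J a b w (by omega)
  rw [hrest, show gv f J a b 0 = zv f J a b from by simp [gv]]
  unfold zv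
  have h1 : restS f J a % q < q := Nat.mod_lt _ (by omega)
  rw [Nat.add_mod_mod]
  have h2 : restS f J a + (b + (q - restS f J a % q)) = b + q * (restS f J a / q + 1) := by
    rw [Nat.mul_add, Nat.mul_one]
    have := Nat.div_add_mod (restS f J a) q
    omega
  rw [h2, Nat.add_mul_mod_self_left]
  exact Nat.mod_eq_of_lt hb

end final
end VTAux
namespace VTAux
section domain
variable {n q : ℕ} (J : ℕ)

def pset (q : ℕ) : Finset (Fin q) := Finset.univ.filter (fun x => x.val + 1 < q)
def zset (q : ℕ) : Finset (Fin q) := Finset.univ.filter (fun x => x.val = 0)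

lemma mem_pset {q : ℕ} {x : Fin q} : x ∈ pset q ↔ x.val + 1 < q := by
  simp [pset]
lemma mem_zset {q : ℕ} {x : Fin q} : x ∈ zset q ↔ x.val = 0 := by
  simp [zset]

lemma pset_card (q : ℕ) : (pset q).card = q - 1 := by
  rcases Nat.eq_zero_or_pos q with h | h
  · subst h
    rw [show pset 0 = ∅ from rfl]
    rfl
  · have : pset q = Finset.univ.map (Fin.castLEEmb (Nat.sub_le q 1)) := by
      ext x
      rw [mem_pset, Finset.mem_map]
      constructor
      · intro hx
        exact ⟨⟨x.val, by omega⟩, Finset.mem_univ _, by simp [Fin.castLEEmb]⟩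
      · rintro ⟨y, -, rfl⟩
        have := y.isLt
        simp [Fin.castLEEmb]
        omega
    rw [this, Finset.card_map, Finset.card_univ, Fintype.card_fin]

lemma zset_card (hq : 0 < q) : (zset q).card = 1 := by
  have : zset q = {(⟨0, hq⟩ : Fin q)} := by
    ext x
    rw [mem_zset, Finset.mem_singleton]
    constructor
    · intro h; exact Fin.ext h
    · intro h; rw [h]
  rw [this, Finset.card_singleton]

def gpred (J i : ℕ) : Prop := i ≤ 4 ∨ Gs J i
def ppred (J i : ℕ) : Prop := i = 5 ∨ Xs J i ∨ Ys J i

instance (J i : ℕ) : Decidable (gpred J i) := by unfold gpred; infer_instance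
instance (J i : ℕ) : Decidable (ppred J i) := by unfold ppred; infer_instance

lemma ppred_not_gpred {J i : ℕ} (h : ppred J i) : ¬ gpred J i := by
  rintro (h4 | hg)
  · rcases h with rfl | hx | hy
    · omega
    · obtain ⟨e1, -, e3⟩ := hx
      obtain ⟨m, hm, hp⟩ := pow8 e1
      omega
    · obtain ⟨e1, -, e3⟩ := hy
      obtain ⟨m, hm, hp⟩ := pow8 e1
      omega
  · rcases h with rfl | hx | hy
    · exact (small_not_slot (J := J) (i := 5) (by omega)).2.1 hg
    · obtain ⟨e1, -, e3⟩ := hx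
      rw [e3] at hg
      exact not_Gs_powm1 e1 hg
    · obtain ⟨e1, -, e3⟩ := hy
      rw [e3] at hg
      exact not_Gs_pow1 e1 hg

def allowedA (n q J : ℕ) : Fin n → Finset (Fin q) := fun i =>
  if gpred J i.val then zset q else if ppred J i.val then pset q else Finset.univ

def DD (n q J : ℕ) : Finset (Fin n → Fin q) := Fintype.piFinset (allowedA n q J)

lemma DD_props {f : Fin n → Fin q} (hf : f ∈ DD n q J) (hn : 6 ≤ n) (hJn : 2^J + 2 ≤ n) :
    nf f 5 ≤ q - 2 ∧
    (∀ j, 3 ≤ j → j ≤ J → nf f (2^j - 1) ≤ q - 2 ∧ nf f (2^j + 1) ≤ q - 2) := by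
  rw [DD, Fintype.mem_piFinset] at hf
  have hval : ∀ (i : ℕ) (hi : i < n), ppred J i → (f ⟨i, hi⟩).val + 1 < q := by
    intro i hi hp
    have := hf ⟨i, hi⟩
    rw [allowedA, if_neg (ppred_not_gpred hp), if_pos hp, mem_pset] at this
    exact this
  have hnf : ∀ (i : ℕ), i < n → ppred J i → nf f i ≤ q - 2 := by
    intro i hi hp
    have := hval i hi hp
    rw [nf, dif_pos hi]
    omega
  constructor
  · exact hnf 5 (by omega) (Or.inl rfl)
  · intro j h3 hJ'
    have hb : 2^j ≤ 2^J := Nat.pow_le_pow_right (by norm_num) hJ'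
    have h1 : (1:ℕ) ≤ 2^j := Nat.one_le_two_pow
    constructor
    · exact hnf _ (by omega) (Or.inr (Or.inl (Xs_pow h3 hJ')))
    · exact hnf _ (by omega) (Or.inr (Or.inr (Ys_pow h3 hJ')))

-- counting helper
lemma card_filter_val {P : ℕ → Prop} [DecidablePred P] (S : Finset ℕ)
    (hS : ∀ x ∈ S, x < n) (hP : ∀ x, x < n → (P x ↔ x ∈ S)) :
    ((Finset.univ : Finset (Fin n)).filter (fun i => P i.val)).card = S.card := by
  apply Finset.card_bij (fun i _ => i.val)
  · intro i hi
    rw [Finset.mem_filter] at hi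
    exact (hP i.val i.isLt).1 hi.2
  · intro i _ j _ hij
    exact Fin.ext hij
  · intro x hx
    refine ⟨⟨x, hS x hx⟩, ?_, rfl⟩
    rw [Finset.mem_filter]
    exact ⟨Finset.mem_univ _, (hP x (hS x hx)).2 hx⟩

def GsetN (J : ℕ) : Finset ℕ := Finset.range 5 ∪ (Finset.Icc 3 J).image (2 ^ ·)
def PsetN (J : ℕ) : Finset ℕ :=
  {5} ∪ ((Finset.Icc 3 J).image (fun j => 2^j - 1) ∪ (Finset.Icc 3 J).image (fun j => 2^j + 1))

lemma gpred_iff {i : ℕ} : gpred J i ↔ i ∈ GsetN J := by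
  rw [gpred, GsetN, Finset.mem_union, Finset.mem_range, Gs_iff]
  constructor
  · rintro (h | ⟨j, ⟨h1, h2⟩, rfl⟩)
    · exact Or.inl (by omega)
    · exact Or.inr (Finset.mem_image.2 ⟨j, Finset.mem_Icc.2 ⟨h1, h2⟩, rfl⟩)
  · rintro (h | h)
    · exact Or.inl (by omega)
    · obtain ⟨j, hj, rfl⟩ := Finset.mem_image.1 h
      rw [Finset.mem_Icc] at hj
      exact Or.inr ⟨j, hj, rfl⟩

lemma ppred_iff {i : ℕ} : ppred J i ↔ i ∈ PsetN J := by
  rw [ppred, PsetN, Finset.mem_union, Finset.mem_union, Finset.mem_singleton, Xs_iff, Ys_iff]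
  constructor
  · rintro (rfl | ⟨j, ⟨h1, h2⟩, rfl⟩ | ⟨j, ⟨h1, h2⟩, rfl⟩)
    · exact Or.inl rfl
    · exact Or.inr (Or.inl (Finset.mem_image.2 ⟨j, Finset.mem_Icc.2 ⟨h1, h2⟩, rfl⟩))
    · exact Or.inr (Or.inr (Finset.mem_image.2 ⟨j, Finset.mem_Icc.2 ⟨h1, h2⟩, rfl⟩))
  · rintro (rfl | h | h)
    · exact Or.inl rfl
    · obtain ⟨j, hj, rfl⟩ := Finset.mem_image.1 h
      rw [Finset.mem_Icc] at hj
      exact Or.inr (Or.inl ⟨j, hj, rfl⟩)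
    · obtain ⟨j, hj, rfl⟩ := Finset.mem_image.1 h
      rw [Finset.mem_Icc] at hj
      exact Or.inr (Or.inr ⟨j, hj, rfl⟩)

lemma GsetN_card (hJ : 2 ≤ J) : (GsetN J).card = J + 3 := by
  rw [GsetN, Finset.card_union_of_disjoint, Finset.card_range,
    Finset.card_image_of_injOn (fun x _ y _ h => pow_inj h), Nat.card_Icc]
  · omega
  · rw [Finset.disjoint_right]
    intro x hx hx'
    obtain ⟨j, hj, rfl⟩ := Finset.mem_image.1 hx
    rw [Finset.mem_Icc] at hj
    obtain ⟨m, hm, hp⟩ := pow8 hj.1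
    rw [Finset.mem_range] at hx'
    omega

lemma PsetN_card (hJ : 2 ≤ J) : (PsetN J).card = 2 * J - 3 := by
  have hd1 : Disjoint ((Finset.Icc 3 J).image (fun j => 2^j - 1))
      ((Finset.Icc 3 J).image (fun j => 2^j + 1)) := by
    rw [Finset.disjoint_right]
    intro x hx hx'
    obtain ⟨j, hj, rfl⟩ := Finset.mem_image.1 hx
    obtain ⟨j', hj', he⟩ := Finset.mem_image.1 hx'
    rw [Finset.mem_Icc] at hj hj'
    obtain ⟨m, hm, hp⟩ := pow8 hj.1
    obtain ⟨m', hm', hp'⟩ := pow8 hj'.1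
    omega
  have hd2 : Disjoint ({5} : Finset ℕ)
      (((Finset.Icc 3 J).image (fun j => 2^j - 1)) ∪ ((Finset.Icc 3 J).image (fun j => 2^j + 1))) := by
    rw [Finset.disjoint_right]
    intro x hx hx'
    rw [Finset.mem_union] at hx
    rw [Finset.mem_singleton] at hx'
    rcases hx with hx | hx <;>
    · obtain ⟨j, hj, rfl⟩ := Finset.mem_image.1 hx
      rw [Finset.mem_Icc] at hj
      obtain ⟨m, hm, hp⟩ := pow8 hj.1
      omega
  rw [PsetN, Finset.card_union_of_disjoint hd2, Finset.card_union_of_disjoint hd1,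
    Finset.card_singleton,
    Finset.card_image_of_injOn (fun x hx y hy h => by
      simp only [Finset.coe_Icc, Set.mem_Icc] at hx hy
      have h1 : (1:ℕ) ≤ 2^x := Nat.one_le_two_pow
      have h2 : (1:ℕ) ≤ 2^y := Nat.one_le_two_pow
      exact pow_inj (by omega)),
    Finset.card_image_of_injOn (fun x hx y hy h => by
      exact pow_inj (by omega)),
    Nat.card_Icc]
  omega

lemma GsetN_lt (hJn : 2^J + 2 ≤ n) (hn : 6 ≤ n) : ∀ x ∈ GsetN J, x < n := by
  intro x hx
  rw [GsetN, Finset.mem_union] at hx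
  rcases hx with hx | hx
  · rw [Finset.mem_range] at hx; omega
  · obtain ⟨j, hj, rfl⟩ := Finset.mem_image.1 hx
    rw [Finset.mem_Icc] at hj
    have : 2^j ≤ 2^J := Nat.pow_le_pow_right (by norm_num) hj.2
    omega

lemma PsetN_lt (hJn : 2^J + 2 ≤ n) (hn : 6 ≤ n) : ∀ x ∈ PsetN J, x < n := by
  intro x hx
  rw [PsetN, Finset.mem_union, Finset.mem_union] at hx
  rcases hx with hx | hx | hx
  · rw [Finset.mem_singleton] at hx; omega
  all_goals
    obtain ⟨j, hj, rfl⟩ := Finset.mem_image.1 hx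
    rw [Finset.mem_Icc] at hj
    have : 2^j ≤ 2^J := Nat.pow_le_pow_right (by norm_num) hj.2
    have : (1:ℕ) ≤ 2^j := Nat.one_le_two_pow
    omega

lemma DD_card (hq : 4 ≤ q) (hn : 6 ≤ n) (hJ : 2 ≤ J) (hJn : 2^J + 2 ≤ n) :
    (DD n q J).card = (q-1)^(2*J - 3) * q^(n - (J + 3) - (2*J - 3)) := by
  rw [DD, Fintype.card_piFinset]
  rw [← Finset.prod_filter_mul_prod_filter_not Finset.univ (fun i : Fin n => gpred J i.val)]
  have h1 : ∏ i ∈ Finset.univ.filter (fun i : Fin n => gpred J i.val),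
      ((allowedA n q J) i).card = 1 := by
    apply Finset.prod_eq_one
    intro i hi
    rw [Finset.mem_filter] at hi
    rw [allowedA, if_pos hi.2]
    exact zset_card (by omega)
  rw [h1, one_mul]
  rw [← Finset.prod_filter_mul_prod_filter_not
    (Finset.univ.filter (fun i : Fin n => ¬ gpred J i.val)) (fun i : Fin n => ppred J i.val)]
  have hps : (Finset.univ.filter (fun i : Fin n => ¬ gpred J i.val)).filter
      (fun i : Fin n => ppred J i.val) = Finset.univ.filter (fun i : Fin n => ppred J i.val) := by
    rw [Finset.filter_filter]
    apply Finset.filter_congr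
    intro i _
    constructor
    · rintro ⟨-, h⟩; exact h
    · intro h; exact ⟨ppred_not_gpred h, h⟩
  have h2 : ∏ i ∈ (Finset.univ.filter (fun i : Fin n => ¬ gpred J i.val)).filter
      (fun i : Fin n => ppred J i.val), ((allowedA n q J) i).card = (q-1)^(2*J-3) := by
    rw [hps]
    rw [Finset.prod_congr rfl (fun i hi => ?_)]
    · rw [Finset.prod_const]
      congr 1
      rw [card_filter_val (PsetN J) (PsetN_lt J hJn hn) (fun x _ => ppred_iff J)]
      exact PsetN_card J hJ
    · rw [Finset.mem_filter] at hi
      rw [allowedA, if_neg (ppred_not_gpred hi.2), if_pos hi.2]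
      exact pset_card q
  rw [h2]
  have h3 : ∏ i ∈ (Finset.univ.filter (fun i : Fin n => ¬ gpred J i.val)).filter
      (fun i : Fin n => ¬ ppred J i.val), ((allowedA n q J) i).card
        = q^(n - (J + 3) - (2*J - 3)) := by
    rw [Finset.prod_congr rfl (fun i hi => ?_)]
    · rw [Finset.prod_const]
      congr 1
      have hcard1 : (Finset.univ.filter (fun i : Fin n => gpred J i.val)).card = J + 3 := by
        rw [card_filter_val (GsetN J) (GsetN_lt J hJn hn) (fun x _ => gpred_iff J)]
        exact GsetN_card J hJ
      have hcard2 : (Finset.univ.filter (fun i : Fin n => ppred J i.val)).card = 2*J - 3 := by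
        rw [card_filter_val (PsetN J) (PsetN_lt J hJn hn) (fun x _ => ppred_iff J)]
        exact PsetN_card J hJ
      have ht1 := Finset.card_filter_add_card_filter_not
        (s := (Finset.univ : Finset (Fin n))) (p := fun i : Fin n => gpred J i.val)
      have ht2 := Finset.card_filter_add_card_filter_not
        (s := Finset.univ.filter (fun i : Fin n => ¬ gpred J i.val))
        (p := fun i : Fin n => ppred J i.val)
      rw [hps] at ht2
      have hu : (Finset.univ : Finset (Fin n)).card = n := by
        rw [Finset.card_univ, Fintype.card_fin]
      omega
    · rw [Finset.mem_filter, Finset.mem_filter] at hi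
      rw [allowedA, if_neg hi.1.2, if_neg hi.2]
      rw [Finset.card_univ, Fintype.card_fin]
  rw [h3]

end domain
end VTAux
namespace VTAux
section inj
variable {n q : ℕ} (f : Fin n → Fin q) (J a b : ℕ)

lemma nf_val (f : Fin n → Fin q) (i : Fin n) : nf f i.val = (f i).val := by
  rw [nf, dif_pos i.isLt]

lemma gv_xslot {j : ℕ} (h1 : 3 ≤ j) (h2 : j ≤ J) :
    gv f J a b (2^j - 1) = xv f j := by
  obtain ⟨m, hm, hp⟩ := pow8 h1
  rw [gv_pos f J a b _ (by omega)]
  rw [gvP_eq_dv f J a (by omega) (by omega) (by omega) (not_Gs_powm1 h1)]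
  exact dv_x f J h1 h2

lemma gv_yslot {j : ℕ} (h1 : 3 ≤ j) (h2 : j ≤ J) :
    gv f J a b (2^j + 1) = yv f j := by
  obtain ⟨m, hm, hp⟩ := pow8 h1
  rw [gv_pos f J a b _ (by omega)]
  rw [gvP_eq_dv f J a (by omega) (by omega) (by omega) (not_Gs_pow1 h1)]
  exact dv_y f J h1 h2

lemma enc_injOn (hq0 : 0 < q) (hn : 6 ≤ n) (hq : 4 ≤ q) (hJn : 2^J + 2 ≤ n) :
    Set.InjOn (fun f => enc hq0 f J a b) ((DD n q J : Finset (Fin n → Fin q)) : Set (Fin n → Fin q)) := by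
  intro f hf f' hf' he
  have hf1 := DD_props J (Finset.mem_coe.1 hf) hn hJn
  have hf2 := DD_props J (Finset.mem_coe.1 hf') hn hJn
  have hglt := gv_lt f J a b hq hf1.2
  have hglt' := gv_lt f' J a b hq hf2.2
  simp only at he
  have hgv : ∀ m, m < n → gv f J a b m = gv f' J a b m := by
    intro m hm
    have hv : gv f J a b m % q = gv f' J a b m % q :=
      congrArg Fin.val (congrFun he ⟨m, hm⟩)
    rw [Nat.mod_eq_of_lt (hglt m), Nat.mod_eq_of_lt (hglt' m)] at hv
    exact hv
  funext i
  apply Fin.ext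
  by_cases hg : gpred J i.val
  · have m1 := (Fintype.mem_piFinset.1 (Finset.mem_coe.1 hf)) i
    have m2 := (Fintype.mem_piFinset.1 (Finset.mem_coe.1 hf')) i
    rw [allowedA, if_pos hg, mem_zset] at m1 m2
    rw [m1, m2]
  · have hg5 : 5 ≤ i.val := by
      rcases Nat.lt_or_ge i.val 5 with h | h
      · exact absurd (Or.inl (by omega)) hg
      · exact h
    have hgG : ¬ Gs J i.val := fun h => hg (Or.inr h)
    rw [← nf_val f i, ← nf_val f' i]
    by_cases hp5 : i.val = 5
    · have e1 : gv f J a b 5 = nf f 5 := by rw [gv_pos f J a b 5 (by omega), gvP_5]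
      have e2 : gv f' J a b 5 = nf f' 5 := by rw [gv_pos f' J a b 5 (by omega), gvP_5]
      have := hgv 5 (by omega)
      rw [e1, e2] at this
      rw [hp5]
      exact this
    by_cases hx : Xs J i.val
    · obtain ⟨e1, e2, e3⟩ := hx
      have hb : 2^(lgx i.val) ≤ 2^J := Nat.pow_le_pow_right (by norm_num) e2
      have h1 : (1:ℕ) ≤ 2^(lgx i.val) := Nat.one_le_two_pow
      have hv := hgv (2^(lgx i.val) - 1) (by omega)
      rw [gv_xslot f J a b e1 e2, gv_xslot f' J a b e1 e2] at hv
      rw [e3]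
      unfold xv at hv
      omega
    by_cases hy : Ys J i.val
    · obtain ⟨e1, e2, e3⟩ := hy
      have hb : 2^(lgy i.val) ≤ 2^J := Nat.pow_le_pow_right (by norm_num) e2
      have h1 : (1:ℕ) ≤ 2^(lgy i.val) := Nat.one_le_two_pow
      have hvx := hgv (2^(lgy i.val) - 1) (by omega)
      rw [gv_xslot f J a b e1 e2, gv_xslot f' J a b e1 e2] at hvx
      have hvy := hgv (2^(lgy i.val) + 1) (by omega)
      rw [gv_yslot f J a b e1 e2, gv_yslot f' J a b e1 e2] at hvy
      rw [e3]
      unfold yv at hvy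
      have hxx : nf f (2^(lgy i.val) - 1) = nf f' (2^(lgy i.val) - 1) := by
        unfold xv at hvx; omega
      split_ifs at hvy <;> omega
    · -- free slot
      have e1 : gv f J a b i.val = nf f i.val := by
        rw [gv_eq_dv f J a b (by omega) (by omega) (by omega) (by omega) hgG]
        exact dv_other f J (by omega) hx hgG hy
      have e2 : gv f' J a b i.val = nf f' i.val := by
        rw [gv_eq_dv f' J a b (by omega) (by omega) (by omega) (by omega) hgG]
        exact dv_other f' J (by omega) hx hgG hy
      have := hgv i.val i.isLt
      rw [e1, e2] at this
      exact this

end inj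

section main

lemma main_count {n q : ℕ} (J a b : ℕ) (hn : 6 ≤ n) (hq : 4 ≤ q) (hJ : 2 ≤ J)
    (hJn : 2^J + 2 ≤ n)
    (hcov : n ≤ 8 * 2^(J-2) ∨ n = 8 * 2^(J-2) + 1) (ha : a < n) (hb : b < q) :
    (q-1)^(2*J - 3) * q^(n - (J + 3) - (2*J - 3)) ≤ (VTq n q a b).card := by
  have hq0 : 0 < q := by omega
  rw [← DD_card (n := n) J hq hn hJ hJn]
  apply Finset.card_le_card_of_injOn (fun f => enc hq0 f J a b)
  · intro f hf
    obtain ⟨h5, hPx⟩ := DD_props J hf hn hJn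
    rw [VTq, Finset.mem_coe, Finset.mem_filter]
    exact ⟨Finset.mem_univ _,
      qsyn_enc f J a b hq0 hn hq hJ hJn ha hcov h5 hPx,
      qsum_enc f J a b hq0 hn hq hb hPx⟩
  · exact enc_injOn J a b hq0 hn hq hJn

lemma lin_pow4 : ∀ t : ℕ, 4 ≤ t → 3 * t ≤ 2^(t-1) + 4 := by
  intro t ht
  induction t, ht using Nat.le_induction with
  | base => norm_num
  | succ t ht ih =>
    have h1 : (8:ℕ) ≤ 2^(t-1) := by
      calc (8:ℕ) = 2^3 := by norm_num
      _ ≤ 2^(t-1) := Nat.pow_le_pow_right (by norm_num) (by omega)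
    have h2 : 2^(t+1-1) = 2 * 2^(t-1) := by
      rw [show t+1-1 = (t-1)+1 by omega, pow_succ, mul_comm]
    omega

lemma lin_pow : ∀ t : ℕ, 3 ≤ t → 3 * t ≤ 2^(t-1) + 5 := by
  intro t ht
  induction t, ht using Nat.le_induction with
  | base => norm_num
  | succ t ht ih =>
    have h1 : (4:ℕ) ≤ 2^(t-1) := by
      calc (4:ℕ) = 2^2 := by norm_num
      _ ≤ 2^(t-1) := Nat.pow_le_pow_right (by norm_num) (by omega)
    have h2 : 2^(t+1-1) = 2 * 2^(t-1) := by
      rw [show t+1-1 = (t-1)+1 by omega, pow_succ, mul_comm]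
    omega

end main
end VTAux

theorem vt_qary_card_lower_bound (n q : ℕ) (hn : 6 ≤ n) (hq : 4 ≤ q)
    (t : ℕ) (ht : t = Nat.clog 2 n)
    (a b : ℕ) (ha : a ≤ n - 1) (hb : b < q) :
    (q - 1) ^ (2 * t - 5) * q ^ (n + 3 - 3 * t) ≤ (VTq n q a b).card := by
  have hn1 : 1 < n := by omega
  have hlow : 2^(t-1) < n := by
    rw [ht]; exact Nat.pow_pred_clog_lt_self (by norm_num) hn1
  have hhigh : n ≤ 2^t := by rw [ht]; exact Nat.le_pow_clog (by norm_num) n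
  have ht3 : 3 ≤ t := by
    have h4 : (2:ℕ)^2 < n := by omega
    rw [ht]
    have := (Nat.lt_clog_iff_pow_lt (by norm_num)).2 h4
    omega
  have ha' : a < n := by omega
  have hlin := VTAux.lin_pow t ht3
  by_cases hsp : n = 2^(t-1) + 1
  · -- special case J = t - 2
    have ht4 : 4 ≤ t := by
      by_contra h
      have h3 : t = 3 := by omega
      rw [h3] at hsp
      norm_num at hsp
      omega
    have hpow1 : 2^(t-1) = 2 * 2^(t-2) := by
      rw [show t-1 = (t-2)+1 by omega, pow_succ, mul_comm]
    have hpow2 : 2^(t-1) = 8 * 2^(t-2-2) := by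
      rw [show t-1 = (t-2-2)+3 by omega, pow_add]
      ring
    have h1 : (1:ℕ) ≤ 2^(t-2) := Nat.one_le_two_pow
    have hlin4 := VTAux.lin_pow4 t ht4
    have hj2 : 2 ≤ t - 2 := by omega
    have hjn : 2^(t-2) + 2 ≤ n := by omega
    have hcv : n = 8 * 2^((t-2)-2) + 1 := by omega
    have hmc := VTAux.main_count (n := n) (q := q) (t-2) a b hn hq hj2 hjn (Or.inr hcv) ha' hb
    refine le_trans ?_ hmc
    have he1 : 2*(t-2) - 3 = 2*t - 7 := by omega
    rw [he1] at hmc ⊢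
    have he2 : n - ((t-2) + 3) - (2*t - 7) = (n + 3 - 3*t) + 3 := by omega
    rw [he2]
    have hsplit : 2*t - 5 = (2*t - 7) + 2 := by omega
    rw [hsplit, pow_add, pow_add]
    have h23 : (q-1)^2 ≤ q^3 := by
      calc (q-1)^2 ≤ q^2 := Nat.pow_le_pow_left (by omega) 2
      _ ≤ q^3 := Nat.pow_le_pow_right (by omega) (by omega)
    calc (q-1)^(2*t-7) * (q-1)^2 * q^(n+3-3*t)
        ≤ (q-1)^(2*t-7) * q^3 * q^(n+3-3*t) :=
          Nat.mul_le_mul (Nat.mul_le_mul (le_refl _) h23) (le_refl _)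
      _ = (q-1)^(2*t-7) * (q^(n+3-3*t) * q^3) := by ring
  · -- normal case J = t - 1
    have hJn : 2^(t-1) + 2 ≤ n := by omega
    have hpow : 2^t = 8 * 2^(t-1-2) := by
      have e : 3 + (t - 1 - 2) = t := by omega
      calc 2^t = 2^(3 + (t-1-2)) := (congrArg (fun x => 2^x) e).symm
      _ = 8 * 2^(t-1-2) := by rw [pow_add]; ring
    have hmc := VTAux.main_count (n := n) (q := q) (t-1) a b hn hq (by omega)
      (by omega) (Or.inl (by omega)) ha' hb
    have he1 : 2*(t-1) - 3 = 2*t - 5 := by omega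
    rw [he1] at hmc
    have he2 : n - ((t-1) + 3) - (2*t - 5) = n + 3 - 3*t := by omega
    rw [he2] at hmc
    exact hmc
end

section
/- Let n ≥ 6 and let t = ⌈log₂ n⌉. Then for q = 3, for every a with 0 ≤ a ≤ n−1 and every b ∈ Z_3, the ternary Varshamov–Tenengolts code VT_{a,b}(n) satisfies |VT_{a,b}(n)| ≥ 2^{2(t−3)} · 3^{n−3t+3}. -/
/-
Systematic encoding. Put `t = ⌈log₂ n⌉` and call the powers `p = 2^j`, `3 ≤ j < t`, pivots; they
all lie in `[8, n)` and are multiples of `8`. A message word has the entry `0` at the six prefix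
positions and at each `p - 1`, entries in `{0, 1}` at each `p - 2` and `p`, and arbitrary ternary
entries elsewhere, so there are `2^(2(t-3)) · 3^(n+3-3t)` messages. Around each pivot the codeword
is `x_{p-2}(2 - x_p), x_p + (1 - e_p), x_p`: the ascent bit at index `p` is the free bit `e_p`,
while every other ascent bit does not depend on `e_p`. Setting the bits `e_p` adds any multiple of
`8` below `2^t ≥ n` to the syndrome, and a prefix chosen from a table of `24` words of length six
(ending in `0`) adds `4 + r` for any `r < 8` and fixes the sum modulo `3`. So every message has a
codeword in `VT_{a,b}(n)`, and the message can be read back from it.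
-/

open Finset

namespace TernaryVT

def ascentWeight {α : Type*} [LinearOrder α] (f : ℕ → α) (i : ℕ) : ℕ :=
  if f i ≤ f (i + 1) then i + 1 else 0

lemma qsyn_restrict {n q : ℕ} (f : ℕ → Fin q) :
    qsyn (fun i : Fin n => f i) = (∑ i ∈ range (n - 1), ascentWeight f i) % n := by
  rw [qsyn, ← Fin.sum_univ_eq_sum_range]
  congr 1
  refine sum_congr rfl fun i _ => ?_
  simp only [ascentWeight, mul_ite, mul_one, mul_zero]

lemma qsum_restrict {n q : ℕ} (f : ℕ → Fin q) :
    qsum (fun i : Fin n => f i) = (∑ i ∈ range n, (f i : ℕ)) % q := by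
  rw [qsum, ← Fin.sum_univ_eq_sum_range]

def pivots (t : ℕ) : Finset ℕ := (Ico 3 t).image (2 ^ ·)

variable {t n : ℕ}

lemma mem_pivots {p : ℕ} : p ∈ pivots t ↔ ∃ j, (3 ≤ j ∧ j < t) ∧ 2 ^ j = p := by
  simp [pivots]

lemma eight_dvd_of_mem_pivots {p : ℕ} (hp : p ∈ pivots t) : 8 ∣ p := by
  obtain ⟨j, ⟨hj, -⟩, rfl⟩ := mem_pivots.1 hp
  exact Nat.pow_dvd_pow 2 hj

lemma eight_le_of_mem_pivots {p : ℕ} (hp : p ∈ pivots t) : 8 ≤ p :=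
  Nat.le_of_dvd (by obtain ⟨j, -, rfl⟩ := mem_pivots.1 hp; positivity)
    (eight_dvd_of_mem_pivots hp)

lemma lt_of_mem_pivots (hn : 2 ^ (t - 1) < n) {p : ℕ} (hp : p ∈ pivots t) : p < n := by
  obtain ⟨j, ⟨-, hj⟩, rfl⟩ := mem_pivots.1 hp
  exact lt_of_le_of_lt (Nat.pow_le_pow_right two_pos (by omega)) hn

lemma card_pivots : #(pivots t) = t - 3 := by
  rw [pivots, card_image_of_injective _ (Nat.pow_right_injective le_rfl), Nat.card_Ico]

lemma exists_subset_pivots_sum_eq {u : ℕ} (hu : u < 2 ^ (t - 3)) :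
    ∃ J ⊆ pivots t, ∑ p ∈ J, p = 8 * u := by
  refine ⟨u.bitIndices.toFinset.image fun k => 2 ^ (k + 3), ?_, ?_⟩
  · intro p hp
    obtain ⟨k, hk, rfl⟩ := mem_image.1 hp
    have : 2 ^ k < 2 ^ (t - 3) :=
      (Nat.two_pow_le_of_mem_bitIndices (List.mem_toFinset.1 hk)).trans_lt hu
    have := (Nat.pow_lt_pow_iff_right (by norm_num : 1 < 2)).1 this
    exact mem_pivots.2 ⟨k + 3, by omega, rfl⟩
  · rw [sum_image fun _ _ _ _ h => by simpa using Nat.pow_right_injective le_rfl h]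
    simp_rw [pow_add, ← sum_mul, Finset.sum_toFinset_bitIndices_two_pow]
    ring

def encode (t : ℕ) (v : ℕ → Fin 3) (J : Finset ℕ) (x : ℕ → Fin 3) (i : ℕ) : Fin 3 :=
  if i < 6 then v i
  else if i + 2 ∈ pivots t then x i * (2 - x (i + 2))
  else if i + 1 ∈ pivots t then x (i + 1) + if i + 1 ∈ J then 0 else 1
  else x i

def cap (t i : ℕ) : Fin 3 :=
  if i < 6 ∨ i + 1 ∈ pivots t then 0 else if i ∈ pivots t ∨ i + 2 ∈ pivots t then 1 else 2

def decode (t i : ℕ) (c : Fin 3) : Fin 3 :=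
  if cap t i = 0 then 0 else if i + 2 ∈ pivots t then min c 1 else c

section encode

variable {v v' : ℕ → Fin 3} {J J' : Finset ℕ} {x : ℕ → Fin 3} {i : ℕ}

lemma encode_of_lt_six (hi : i < 6) : encode t v J x i = v i := if_pos hi

lemma encode_of_add_two_mem (hi : i + 2 ∈ pivots t) :
    encode t v J x i = x i * (2 - x (i + 2)) := by
  have := eight_le_of_mem_pivots hi
  simp [encode, hi, show ¬ i < 6 by omega]

lemma encode_of_add_one_mem (hi : i + 1 ∈ pivots t) :
    encode t v J x i = x (i + 1) + if i + 1 ∈ J then 0 else 1 := by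
  have := eight_le_of_mem_pivots hi
  have h2 : i + 2 ∉ pivots t := fun h2 => by
    have := eight_dvd_of_mem_pivots hi; have := eight_dvd_of_mem_pivots h2; omega
  simp [encode, hi, h2, show ¬ i < 6 by omega]

lemma encode_of_not_mem (h6 : 6 ≤ i) (h2 : i + 2 ∉ pivots t) (h1 : i + 1 ∉ pivots t) :
    encode t v J x i = x i := by
  simp [encode, h1, h2, show ¬ i < 6 by omega]

lemma encode_eq_encode_of_six_le (h6 : 6 ≤ i) : encode t v J x i = encode t v' J x i := by
  simp [encode, show ¬ i < 6 by omega]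

lemma encode_eq_encode_of_not_mem (h6 : 6 ≤ i) (h1 : i + 1 ∉ pivots t) :
    encode t v J x i = encode t v' J' x i := by
  simp [encode, h1, show ¬ i < 6 by omega]

end encode

lemma not_lt_six_or_add_one_mem_pivots {i : ℕ} (h : i ∈ pivots t ∨ i + 2 ∈ pivots t) :
    ¬(i < 6 ∨ i + 1 ∈ pivots t) := by
  rintro (h6 | h1)
  · rcases h with h | h <;> have := eight_le_of_mem_pivots h <;> omega
  · have := eight_dvd_of_mem_pivots h1
    rcases h with h | h <;> have := eight_dvd_of_mem_pivots h <;> omega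

lemma cap_eq_one {i : ℕ} (h : i ∈ pivots t ∨ i + 2 ∈ pivots t) : cap t i = 1 := by
  rw [cap, if_neg (not_lt_six_or_add_one_mem_pivots h), if_pos h]

lemma decode_encode {v : ℕ → Fin 3} {J : Finset ℕ} {x : ℕ → Fin 3} (hx : ∀ i, x i ≤ cap t i)
    (i : ℕ) : decode t i (encode t v J x i) = x i := by
  by_cases h0 : cap t i = 0
  · simpa [decode, h0, eq_comm] using (hx i).trans_eq h0
  obtain ⟨h6, h1⟩ : 6 ≤ i ∧ i + 1 ∉ pivots t := by
    by_contra h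
    exact h0 (if_pos (by rw [not_and_or, not_le, not_not] at h; exact h))
  by_cases h2 : i + 2 ∈ pivots t
  · have key : ∀ a c : Fin 3, a ≤ 1 → c ≤ 1 → min (a * (2 - c)) 1 = a := by decide
    rw [decode, if_neg h0, if_pos h2, encode_of_add_two_mem h2,
      key _ _ ((hx i).trans_eq (cap_eq_one (.inr h2))) ((hx _).trans_eq (cap_eq_one (.inl h2)))]
  · rw [decode, if_neg h0, if_neg h2, encode_of_not_mem h6 h2 h1]

section syndrome

variable {v : ℕ → Fin 3} {J : Finset ℕ} {x : ℕ → Fin 3}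

lemma ascentWeight_encode (hv : v 5 = 0) (hJ : J ⊆ pivots t) (hx : ∀ i, x i ≤ cap t i) {i : ℕ}
    (hi : 5 ≤ i) :
    ascentWeight (encode t v J x) i =
      ascentWeight (encode t 0 ∅ x) i + if i + 1 ∈ J then i + 1 else 0 := by
  rcases hi.eq_or_lt with rfl | hi
  · have h6 : 6 ∉ J := fun h => absurd (eight_le_of_mem_pivots (hJ h)) (by norm_num)
    simp [ascentWeight, encode_of_lt_six, hv, h6]
  by_cases h1 : i + 1 ∈ pivots t
  · have h3 : i + 1 + 2 ∉ pivots t := fun h3 => by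
      have := eight_dvd_of_mem_pivots h1; have := eight_dvd_of_mem_pivots h3; omega
    have h2 : i + 1 + 1 ∉ pivots t := fun h2 => by
      have := eight_dvd_of_mem_pivots h1; have := eight_dvd_of_mem_pivots h2; omega
    have hx1 : ¬ x (i + 1) + 1 ≤ x (i + 1) := by
      have key : ∀ b : Fin 3, b ≤ 1 → ¬ b + 1 ≤ b := by decide
      exact key _ ((hx _).trans_eq (cap_eq_one (.inl h1)))
    simp only [ascentWeight, encode_of_add_one_mem h1, encode_of_not_mem (by omega) h3 h2]
    split_ifs <;> simp_all
  have hiJ : i + 1 ∉ J := fun h => h1 (hJ h)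
  simp only [ascentWeight, encode_eq_encode_of_not_mem (v' := 0) (J' := ∅) hi h1, hiJ,
    if_false, add_zero]
  by_cases h2 : i + 2 ∈ pivots t
  · have key : ∀ a c ε : Fin 3, a ≤ 1 → c ≤ 1 → ε ≤ 1 →
        (a * (2 - c) ≤ c + ε ↔ a * (2 - c) ≤ c + 1) := by
      decide
    rw [encode_of_add_two_mem h2, encode_of_add_one_mem h2, encode_of_add_one_mem h2]
    simp only [show i + 1 + 1 = i + 2 from rfl, if_neg (Finset.notMem_empty _)]
    have hε : (if i + 2 ∈ J then 0 else 1 : Fin 3) ≤ 1 := by split_ifs <;> decide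
    simp only [key _ _ _ ((hx i).trans_eq (cap_eq_one (.inr h2)))
      ((hx _).trans_eq (cap_eq_one (.inl h2))) hε]
  · rw [encode_eq_encode_of_not_mem (v' := 0) (J' := ∅) (by omega) h2]

lemma sum_ascentWeight_encode (hn : 6 ≤ n) (hlo : 2 ^ (t - 1) < n) (hv : v 5 = 0)
    (hJ : J ⊆ pivots t) (hx : ∀ i, x i ≤ cap t i) :
    ∑ i ∈ range (n - 1), ascentWeight (encode t v J x) i =
      ∑ i ∈ range 5, ascentWeight v i + ∑ p ∈ J, p +
        ∑ i ∈ Ico 5 (n - 1), ascentWeight (encode t 0 ∅ x) i := by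
  have hlow : ∀ i ∈ range 5, ascentWeight (encode t v J x) i = ascentWeight v i := by
    intro i hi
    have := mem_range.1 hi
    simp only [ascentWeight, encode_of_lt_six (show i < 6 by omega),
      encode_of_lt_six (show i + 1 < 6 by omega)]
  have hJ' : J ⊆ Ico 6 n := fun p hp => mem_Ico.2
    ⟨by have := eight_le_of_mem_pivots (hJ hp); omega, lt_of_mem_pivots hlo (hJ hp)⟩
  have hshift : ∑ i ∈ Ico 5 (n - 1), (if i + 1 ∈ J then i + 1 else 0) = ∑ p ∈ J, p := by
    rw [sum_Ico_add' (fun p => if p ∈ J then p else 0), sum_ite_mem,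
      show n - 1 + 1 = n by omega, inter_eq_right.2 hJ']
  rw [← sum_range_add_sum_Ico _ (show 5 ≤ n - 1 by omega), sum_congr rfl hlow,
    sum_congr rfl fun i hi => ascentWeight_encode hv hJ hx (mem_Ico.1 hi).1,
    sum_add_distrib, hshift]
  ring

lemma sum_encode (hn : 6 ≤ n) :
    ∑ i ∈ range n, (encode t v J x i : ℕ) =
      ∑ i ∈ range 6, (v i : ℕ) + ∑ i ∈ Ico 6 n, (encode t 0 J x i : ℕ) := by
  rw [← sum_range_add_sum_Ico _ hn,
    sum_congr rfl fun i hi => congrArg Fin.val (encode_of_lt_six (mem_range.1 hi)),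
    sum_congr rfl fun i hi =>
      congrArg Fin.val (encode_eq_encode_of_six_le (v' := 0) (mem_Ico.1 hi).1)]

end syndrome

def prefixTable : Fin 8 → Fin 3 → List (Fin 3) :=
  ![![[0, 2, 1, 2, 1, 0], [0, 1, 0, 2, 1, 0], [0, 2, 0, 2, 1, 0]],
    ![[1, 0, 2, 2, 1, 0], [0, 2, 1, 0, 1, 0], [0, 2, 1, 0, 2, 0]],
    ![[0, 0, 0, 2, 1, 0], [0, 0, 1, 2, 1, 0], [0, 0, 2, 2, 1, 0]],
    ![[0, 0, 1, 0, 2, 0], [0, 0, 2, 0, 2, 0], [0, 0, 1, 0, 1, 0]],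
    ![[0, 0, 2, 1, 0, 0], [0, 1, 0, 1, 2, 0], [0, 1, 0, 0, 1, 0]],
    ![[0, 1, 0, 2, 0, 0], [0, 2, 0, 2, 0, 0], [0, 1, 0, 1, 0, 0]],
    ![[0, 0, 0, 1, 2, 0], [0, 0, 0, 0, 1, 0], [0, 0, 0, 0, 2, 0]],
    ![[0, 0, 1, 2, 0, 0], [0, 0, 0, 1, 0, 0], [0, 0, 0, 2, 0, 0]]]

lemma exists_prefix {r s : ℕ} (hr : r < 8) (hs : s < 3) :
    ∃ v : ℕ → Fin 3, v 5 = 0 ∧ ∑ i ∈ range 5, ascentWeight v i = 4 + r ∧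
      (∑ i ∈ range 6, (v i : ℕ)) % 3 = s := by
  have table : ∀ (r : Fin 8) (s : Fin 3), (prefixTable r s).getD 5 0 = 0 ∧
      ∑ i ∈ range 5, ascentWeight (fun i => (prefixTable r s).getD i 0) i = 4 + r ∧
      (∑ i ∈ range 6, ((prefixTable r s).getD i 0 : ℕ)) % 3 = s := by
    decide
  exact ⟨fun i => (prefixTable ⟨r, hr⟩ ⟨s, hs⟩).getD i 0, table ⟨r, hr⟩ ⟨s, hs⟩⟩

lemma exists_add_mod_eq {a : ℕ} (ha : a < n) (c : ℕ) : ∃ d < n, (c + d) % n = a := by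
  refine ⟨(a + n - c % n) % n, Nat.mod_lt _ (by omega), ?_⟩
  have := Nat.mod_lt c (show 0 < n by omega)
  rw [Nat.add_mod_mod, ← Nat.mod_add_mod, Nat.add_sub_cancel' (by omega),
    Nat.add_mod_right, Nat.mod_eq_of_lt ha]

lemma exists_encode_mem_VTq (h3 : 3 ≤ t) (hn : 6 ≤ n) (hlo : 2 ^ (t - 1) < n) (hhi : n ≤ 2 ^ t)
    {a b : ℕ} (ha : a < n) (hb : b < 3) {x : ℕ → Fin 3} (hx : ∀ i, x i ≤ cap t i) :
    ∃ v J, (fun i : Fin n => encode t v J x i) ∈ VTq n 3 a b := by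
  obtain ⟨d, hd, hda⟩ :=
    exists_add_mod_eq ha (4 + ∑ i ∈ Ico 5 (n - 1), ascentWeight (encode t 0 ∅ x) i)
  have hu : d / 8 < 2 ^ (t - 3) := by
    rw [Nat.div_lt_iff_lt_mul (by norm_num), show 8 = 2 ^ 3 from rfl, ← pow_add,
      Nat.sub_add_cancel h3]
    omega
  obtain ⟨J, hJ, hJsum⟩ := exists_subset_pivots_sum_eq hu
  obtain ⟨v, hv5, hvsyn, hvsum⟩ := exists_prefix (Nat.mod_lt d (by norm_num : 0 < 8))
    (Nat.mod_lt (b + 3 - (∑ i ∈ Ico 6 n, (encode t 0 J x i : ℕ)) % 3) (by norm_num : 0 < 3))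
  refine ⟨v, J, mem_filter.2 ⟨mem_univ _, ?_, ?_⟩⟩
  · rw [qsyn_restrict, sum_ascentWeight_encode hn hlo hv5 hJ hx, hvsyn, hJsum, ← hda]
    congr 1
    omega
  · rw [qsum_restrict, sum_encode hn]
    omega

lemma card_filter_add_mem_range {s : Finset ℕ} {c : ℕ} (h : ∀ p ∈ s, c ≤ p ∧ p < n + c) :
    #{i ∈ range n | i + c ∈ s} = #s := by
  refine card_nbij' (· + c) (· - c) ?_ ?_ ?_ ?_
  · intro i hi
    exact (mem_filter.1 hi).2
  · intro p hp
    have := h p hp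
    simp only [coe_filter, mem_range, Set.mem_ofPred_eq]
    exact ⟨by omega, by rwa [Nat.sub_add_cancel this.1]⟩
  · intro i _
    simp
  · intro p hp
    exact Nat.sub_add_cancel (h p hp).1

lemma prod_cap_add_one (h3 : 3 ≤ t) (hn : 6 ≤ n) (hlo : 2 ^ (t - 1) < n) :
    ∏ i ∈ range n, ((cap t i : ℕ) + 1) = 2 ^ (2 * (t - 3)) * 3 ^ (n + 3 - 3 * t) := by
  have hcount : ∀ c ≤ 2, #{i ∈ range n | i + c ∈ pivots t} = t - 3 := fun c hc => by
    rw [card_filter_add_mem_range fun p hp =>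
      ⟨by have := eight_le_of_mem_pivots hp; omega, by have := lt_of_mem_pivots hlo hp; omega⟩,
      card_pivots]
  have hfixed : #{i ∈ range n | i < 6 ∨ i + 1 ∈ pivots t} = t + 3 := by
    rw [filter_or, card_union_of_disjoint, hcount 1 (by norm_num),
      show {i ∈ range n | i < 6} = range 6 by ext; simp; omega, card_range]
    · omega
    · exact disjoint_filter.2 fun i _ hi h1 => by have := eight_le_of_mem_pivots h1; omega
  have hbinary : #{i ∈ {i ∈ range n | ¬(i < 6 ∨ i + 1 ∈ pivots t)} |
      i ∈ pivots t ∨ i + 2 ∈ pivots t} = 2 * (t - 3) := by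
    have h0 := hcount 0 (by norm_num)
    simp only [add_zero] at h0
    rw [filter_filter, filter_congr fun i _ => and_iff_right_of_imp not_lt_six_or_add_one_mem_pivots,
      filter_or, card_union_of_disjoint, h0, hcount 2 (by norm_num)]
    · ring
    · exact disjoint_filter.2 fun i _ hi h2 => by
        have := eight_dvd_of_mem_pivots hi; have := eight_dvd_of_mem_pivots h2; omega
  have hfree : #{i ∈ {i ∈ range n | ¬(i < 6 ∨ i + 1 ∈ pivots t)} |
      ¬(i ∈ pivots t ∨ i + 2 ∈ pivots t)} = n + 3 - 3 * t := by
    have h1 := card_filter_add_card_filter_not (s := range n) (fun i => i < 6 ∨ i + 1 ∈ pivots t)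
    have h2 := card_filter_add_card_filter_not (s := {i ∈ range n | ¬(i < 6 ∨ i + 1 ∈ pivots t)})
      (fun i => i ∈ pivots t ∨ i + 2 ∈ pivots t)
    rw [card_range, hfixed] at h1
    omega
  have hcap : ∀ i, (cap t i : ℕ) + 1 = if i < 6 ∨ i + 1 ∈ pivots t then 1
      else if i ∈ pivots t ∨ i + 2 ∈ pivots t then 2 else 3 := by
    intro i
    unfold cap
    split_ifs <;> rfl
  rw [prod_congr rfl fun i _ => hcap i, prod_ite, prod_const_one, one_mul, prod_ite, prod_const,
    prod_const, hbinary, hfree]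

def messages (n t : ℕ) : Finset (Fin n → Fin 3) := Fintype.piFinset fun i => Iic (cap t i)

lemma card_messages (h3 : 3 ≤ t) (hn : 6 ≤ n) (hlo : 2 ^ (t - 1) < n) :
    #(messages n t) = 2 ^ (2 * (t - 3)) * 3 ^ (n + 3 - 3 * t) := by
  simp only [messages, Fintype.card_piFinset, Fin.card_Iic]
  rw [Fin.prod_univ_eq_prod_range (fun i => (cap t i : ℕ) + 1), prod_cap_add_one h3 hn hlo]

lemma extend_le_cap {x : Fin n → Fin 3} (hx : x ∈ messages n t)
    (i : ℕ) : Function.extend Fin.val x 0 i ≤ cap t i := by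
  by_cases hi : i < n
  · rw [show i = (⟨i, hi⟩ : Fin n).val from rfl, Fin.val_injective.extend_apply]
    exact mem_Iic.1 (Fintype.mem_piFinset.1 hx _)
  · rw [Function.extend_apply' _ _ _ fun ⟨j, hj⟩ => hi (hj ▸ j.isLt)]
    exact Fin.zero_le _

lemma card_messages_le_card_VTq (h3 : 3 ≤ t) (hn : 6 ≤ n) (hlo : 2 ^ (t - 1) < n)
    (hhi : n ≤ 2 ^ t) {a b : ℕ} (ha : a < n) (hb : b < 3) :
    #(messages n t) ≤ #(VTq n 3 a b) := by
  choose! v J hvJ using fun x hx =>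
    exists_encode_mem_VTq h3 hn hlo hhi ha hb (extend_le_cap (t := t) (x := x) hx)
  refine card_le_card_of_injOn _ hvJ fun x hx y hy hxy => funext fun i => ?_
  have hi := congrArg (decode t i) (congrFun hxy i)
  rwa [decode_encode (extend_le_cap hx), decode_encode (extend_le_cap hy),
    Fin.val_injective.extend_apply, Fin.val_injective.extend_apply] at hi

end TernaryVT

theorem vt_ternary_card_lower_bound (n : ℕ) (hn : 6 ≤ n)
    (t : ℕ) (ht : t = Nat.clog 2 n)
    (a b : ℕ) (ha : a ≤ n - 1) (hb : b < 3) :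
    2 ^ (2 * (t - 3)) * 3 ^ (n + 3 - 3 * t) ≤ (VTq n 3 a b).card := by
  have hhi : n ≤ 2 ^ t := ht ▸ Nat.le_pow_clog one_lt_two n
  have hlo : 2 ^ (t - 1) < n := ht ▸ Nat.pow_pred_clog_lt_self one_lt_two (by omega)
  have h3 : 3 ≤ t := by
    by_contra h
    have : 2 ^ t ≤ 2 ^ 2 := Nat.pow_le_pow_right two_pos (by omega)
    omega
  rw [← TernaryVT.card_messages h3 hn hlo]
  exact TernaryVT.card_messages_le_card_VTq h3 hn hlo hhi (by omega) hb
end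

section
/- For every positive integer n and every a with 0 ≤ a ≤ n, the binary Varshamov–Tenengolts code VT_a(n) satisfies |VT_a(n)| ≥ 2^{n − ⌈log₂(n+1)⌉}. (This follows from the systematic encoder: distinct assignments of bits to the n − ⌈log₂(n+1)⌉ non-dyadic positions yield distinct codewords of VT_a(n).) -/
/-- VT syndrome of a binary sequence `s_1 ⋯ s_n` (represented 0-indexed):
`syn S = (∑ i, i · s_i) mod (n+1)`. -/
def synBin {n : ℕ} (S : Fin n → Fin 2) : ℕ :=
  (∑ i : Fin n, (i.val + 1) * (S i).val) % (n + 1)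

/-- The binary VT code `VT_a(n)`. -/
def VTbin (n : ℕ) (a : ℕ) : Finset (Fin n → Fin 2) :=
  Finset.univ.filter fun S => synBin S = a

/-!
Every `r ≤ n` is a sum of distinct powers of two not exceeding `n` (its binary expansion), so
whatever bits are placed on the non-dyadic positions, the dyadic positions `1, 2, 4, …` can be
filled in to bring the syndrome to any prescribed `a`. Restriction to the non-dyadic positions
is therefore a surjection from `VT_a(n)` onto `{0,1}^(n - #dyadic)`, and there are at most
`⌈log₂(n+1)⌉` dyadic positions.
-/

open Finset

theorem Finset.pow_card_sub_card_le_card_of_forall_exists_eqOn_compl {ι β : Type*} [Fintype ι]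
    [DecidableEq ι] [Fintype β] [Nonempty β] (s : Finset (ι → β)) (D : Finset ι)
    (h : ∀ f : ι → β, ∃ g ∈ s, ∀ i ∉ D, g i = f i) :
    Fintype.card β ^ (Fintype.card ι - #D) ≤ #s := by
  have hsurj : Set.SurjOn (fun (g : ι → β) (i : {i // i ∉ D}) => g i) s
      (univ : Finset ({i // i ∉ D} → β)) := by
    intro f _
    obtain ⟨g, hg, hgf⟩ := h fun i => if hi : i ∈ D then Classical.arbitrary β else f ⟨i, hi⟩
    exact ⟨g, hg, funext fun i => (hgf i i.2).trans (dif_neg i.2)⟩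
  simpa [Fintype.card_subtype_compl, Fintype.card_coe] using card_le_card_of_surjOn _ hsurj

theorem synBin_eq_iff {n a : ℕ} (ha : a ≤ n) (S : Fin n → Fin 2) :
    synBin S = a ↔ ((∑ i : Fin n, (i.val + 1) * (S i).val : ℕ) : ZMod (n + 1)) = a := by
  rw [synBin, ZMod.natCast_eq_natCast_iff', Nat.mod_eq_of_lt (Nat.lt_succ_of_le ha)]

theorem exists_mem_VTbin_eqOn_compl {n a : ℕ} (ha : a ≤ n) {D : Finset (Fin n)}
    (hD : ∀ r ≤ n, ∃ E ⊆ D, ∑ i ∈ E, (i.val + 1) = r) (f : Fin n → Fin 2) :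
    ∃ S ∈ VTbin n a, ∀ i ∉ D, S i = f i := by
  set c := ∑ i ∈ Dᶜ, (i.val + 1) * (f i).val
  -- the bits on `D` must contribute `a - c` modulo `n + 1`
  obtain ⟨E, hED, hE⟩ := hD ((a - c : ZMod (n + 1)).val) (Nat.lt_succ_iff.mp (ZMod.val_lt _))
  let S : Fin n → Fin 2 := fun i => if i ∈ D then (if i ∈ E then 1 else 0) else f i
  have hS : ∀ i ∉ D, S i = f i := fun i hi => if_neg hi
  have hDsum : ∑ i ∈ D, (i.val + 1) * (S i).val = ∑ i ∈ E, (i.val + 1) := by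
    rw [← inter_eq_right.mpr hED, ← sum_ite_mem]
    refine sum_congr rfl fun i hi => ?_
    simp only [S, if_pos hi]
    split_ifs <;> simp
  have hDcsum : ∑ i ∈ Dᶜ, (i.val + 1) * (S i).val = c :=
    sum_congr rfl fun i hi => by rw [hS i (mem_compl.mp hi)]
  refine ⟨S, ?_, hS⟩
  rw [VTbin, mem_filter, synBin_eq_iff ha, ← sum_add_sum_compl D, hDsum, hDcsum, hE]
  simp

/-- Position `i : Fin n` stands for the paper's index `i + 1`. -/
def dyadicPositions (n : ℕ) : Finset (Fin n) :=
  univ.filter fun i => (i.val + 1).isPowerOfTwo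

theorem Fin.sum_filter_val_add_one_mem {n : ℕ} {M : Finset ℕ} (hM : ∀ m ∈ M, 1 ≤ m ∧ m ≤ n) :
    ∑ i ∈ univ.filter (fun i : Fin n => i.val + 1 ∈ M), (i.val + 1) = ∑ m ∈ M, m := by
  have himage : (univ.filter fun i : Fin n => i.val + 1 ∈ M).image (fun i => i.val + 1) = M := by
    ext m
    simp only [mem_image, mem_filter, mem_univ, true_and]
    refine ⟨fun ⟨i, hi, him⟩ => him ▸ hi, fun hm => ?_⟩
    obtain ⟨h1, h2⟩ := hM m hm
    exact ⟨⟨m - 1, by omega⟩, by simpa [Nat.sub_add_cancel h1] using hm, Nat.sub_add_cancel h1⟩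
  calc _ = ∑ m ∈ (univ.filter fun i : Fin n => i.val + 1 ∈ M).image (fun i => i.val + 1), m :=
        (sum_image fun i _ j _ h => Fin.ext (Nat.add_right_cancel h)).symm
    _ = ∑ m ∈ M, m := by rw [himage]

theorem exists_subset_dyadicPositions_sum_eq {n r : ℕ} (hr : r ≤ n) :
    ∃ E ⊆ dyadicPositions n, ∑ i ∈ E, (i.val + 1) = r := by
  set P := r.bitIndices.toFinset.image (2 ^ ·)
  refine ⟨univ.filter fun i : Fin n => i.val + 1 ∈ P, ?_, ?_⟩
  · intro i hi
    obtain ⟨k, -, hk⟩ := mem_image.mp (mem_filter.mp hi).2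
    exact mem_filter.mpr ⟨mem_univ i, k, hk.symm⟩
  · have hP : ∀ m ∈ P, 1 ≤ m ∧ m ≤ n := by
      simp only [P, mem_image, List.mem_toFinset]
      rintro _ ⟨k, hk, rfl⟩
      exact ⟨Nat.one_le_two_pow, (Nat.two_pow_le_of_mem_bitIndices hk).trans hr⟩
    rw [Fin.sum_filter_val_add_one_mem hP,
      sum_image fun _ _ _ _ h => Nat.pow_right_injective le_rfl h, sum_toFinset_bitIndices_two_pow]

theorem card_dyadicPositions_le (n : ℕ) : #(dyadicPositions n) ≤ Nat.clog 2 (n + 1) := by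
  calc #(dyadicPositions n)
      ≤ #((range (Nat.clog 2 (n + 1))).image (2 ^ ·)) := by
        refine card_le_card_of_injOn (fun i => i.val + 1) (fun i hi => ?_)
          fun i _ j _ h => Fin.ext (Nat.add_right_cancel h)
        obtain ⟨k, hk⟩ := (mem_filter.mp hi).2
        have hk_lt : k < Nat.clog 2 (n + 1) := (Nat.lt_clog_iff_pow_lt one_lt_two).mpr (by omega)
        exact mem_image.mpr ⟨k, mem_range.mpr hk_lt, hk.symm⟩
    _ ≤ Nat.clog 2 (n + 1) := card_image_le.trans (card_range _).le

theorem vt_binary_card_lower_bound_general (n : ℕ) (a : ℕ) (ha : a ≤ n) :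
    2 ^ (n - Nat.clog 2 (n + 1)) ≤ (VTbin n a).card := by
  calc 2 ^ (n - Nat.clog 2 (n + 1)) ≤ 2 ^ (n - #(dyadicPositions n)) :=
        Nat.pow_le_pow_right two_pos (Nat.sub_le_sub_left (card_dyadicPositions_le n) n)
    _ ≤ #(VTbin n a) := by
        simpa using pow_card_sub_card_le_card_of_forall_exists_eqOn_compl (VTbin n a) _
          (exists_mem_VTbin_eqOn_compl ha fun r hr => exists_subset_dyadicPositions_sum_eq hr)

theorem vt_binary_card_lower_bound (n : ℕ) (hn : 1 ≤ n) (a : ℕ) (ha : a ≤ n) :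
    2 ^ (n - Nat.clog 2 (n + 1)) ≤ (VTbin n a).card :=
  vt_binary_card_lower_bound_general n a ha
end

section
/- Let n be a positive integer and t = ⌈log₂(n+1)⌉. For every binary sequence C' = c'_1 ⋯ c'_n ∈ {0,1}^n with c'_{2^i} = 0 for all 0 ≤ i ≤ t−1, and every a with 0 ≤ a ≤ n, there exist bits d_0, …, d_{t−1} ∈ {0,1} such that the sequence C obtained from C' by setting c_{2^i} = d_i for 0 ≤ i ≤ t−1 (and keeping all other coordinates equal to those of C') satisfies syn(C) = a. Specifically, one may take d_{t−1}⋯d_1 d_0 to be the binary representation of the deficiency d = a − syn(C') mod (n+1). -/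
open Finset

section DyadicFill

variable {n : ℕ}

def vtSum (S : Fin n → Fin 2) : ℕ :=
  ∑ j : Fin n, (j.val + 1) * (S j).val

theorem synBin_eq_vtSum_mod (S : Fin n → Fin 2) : synBin S = vtSum S % (n + 1) := rfl

def dyadicFill (C' : Fin n → Fin 2) (t d : ℕ) (j : Fin n) : Fin 2 :=
  if ∃ i < t, j.val + 1 = 2 ^ i then
    (if d.testBit (Nat.log 2 (j.val + 1)) then 1 else 0)
  else C' j

variable {C' : Fin n → Fin 2} {t d : ℕ}

theorem dyadicFill_of_forall_ne {j : Fin n} (hj : ∀ i < t, j.val + 1 ≠ 2 ^ i) :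
    dyadicFill C' t d j = C' j := by
  rw [dyadicFill, if_neg]
  rintro ⟨i, hi, hji⟩
  exact hj i hi hji

theorem dyadicFill_of_eq_two_pow {i : ℕ} {j : Fin n} (hi : i < t) (hj : j.val + 1 = 2 ^ i) :
    dyadicFill C' t d j = if d.testBit i then 1 else 0 := by
  rw [dyadicFill, if_pos ⟨i, hi, hj⟩, hj, Nat.log_pow one_lt_two]

theorem dyadicFill_two_pow_sub_one {i : ℕ} (hi : i < t) (h : 2 ^ i - 1 < n) :
    dyadicFill C' t d ⟨2 ^ i - 1, h⟩ = if d.testBit i then 1 else 0 :=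
  dyadicFill_of_eq_two_pow hi (Nat.sub_add_cancel Nat.one_le_two_pow)

theorem val_dyadicFill (hC' : ∀ i < t, ∀ h : 2 ^ i - 1 < n, C' ⟨2 ^ i - 1, h⟩ = 0)
    (j : Fin n) : (dyadicFill C' t d j).val = (C' j).val + (dyadicFill 0 t d j).val := by
  by_cases hj : ∃ i < t, j.val + 1 = 2 ^ i
  · obtain ⟨i, hi, hji⟩ := hj
    have hC'j : C' j = 0 := by
      rw [show j = ⟨2 ^ i - 1, by omega⟩ from Fin.ext (by simp only; omega)]
      exact hC' i hi _
    simp [dyadicFill_of_eq_two_pow hi hji, hC'j]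
  · push Not at hj
    simp [dyadicFill_of_forall_ne hj]

theorem vtSum_dyadicFill (hC' : ∀ i < t, ∀ h : 2 ^ i - 1 < n, C' ⟨2 ^ i - 1, h⟩ = 0) :
    vtSum (dyadicFill C' t d) = vtSum C' + vtSum (dyadicFill (0 : Fin n → Fin 2) t d) := by
  simp only [vtSum, val_dyadicFill hC', mul_add, sum_add_distrib]

theorem exists_of_dyadicFill_zero_ne_zero {j : Fin n} (h : dyadicFill 0 t d j ≠ 0) :
    ∃ i < t, j.val + 1 = 2 ^ i ∧ d.testBit i := by
  by_cases hj : ∃ i < t, j.val + 1 = 2 ^ i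
  · obtain ⟨i, hi, hji⟩ := hj
    rw [dyadicFill_of_eq_two_pow hi hji] at h
    exact ⟨i, hi, hji, by simpa using h⟩
  · push Not at hj
    exact absurd (dyadicFill_of_forall_ne hj) h

theorem vtSum_dyadicFill_zero_eq_sum_bitIndices (hdn : d < n + 1) (hdt : d < 2 ^ t) :
    vtSum (dyadicFill (0 : Fin n → Fin 2) t d) = ∑ i ∈ d.bitIndices.toFinset, 2 ^ i := by
  have dyadic_of_ne_zero {j : Fin n} (hj : (j.val + 1) * (dyadicFill 0 t d j).val ≠ 0) :
      ∃ i < t, j.val + 1 = 2 ^ i ∧ d.testBit i :=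
    exists_of_dyadicFill_zero_ne_zero (t := t) fun h0 => hj (by simp [h0])
  unfold vtSum
  refine sum_bij_ne_zero (fun j _ _ => Nat.log 2 (j.val + 1)) ?_ ?_ ?_ ?_
  · intro j _ hj
    obtain ⟨i, -, hji, hbit⟩ := dyadic_of_ne_zero hj
    simpa [hji, Nat.log_pow one_lt_two] using hbit
  · intro j₁ _ hj₁ j₂ _ hj₂ hlog
    obtain ⟨i₁, -, hji₁, -⟩ := dyadic_of_ne_zero hj₁
    obtain ⟨i₂, -, hji₂, -⟩ := dyadic_of_ne_zero hj₂
    rw [hji₁, hji₂, Nat.log_pow one_lt_two, Nat.log_pow one_lt_two] at hlog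
    exact Fin.ext (by rw [hlog] at hji₁; omega)
  · intro i hi _
    have hbit : d.testBit i := by simpa using hi
    have hid : 2 ^ i ≤ d := Nat.ge_two_pow_of_testBit hbit
    have hit : i < t := (Nat.pow_lt_pow_iff_right one_lt_two).mp (hid.trans_lt hdt)
    have hpos : 2 ^ i - 1 + 1 = 2 ^ i := Nat.sub_add_cancel Nat.one_le_two_pow
    refine ⟨⟨2 ^ i - 1, by omega⟩, mem_univ _, ?_, ?_⟩
    · simp [dyadicFill_two_pow_sub_one hit, hbit]
    · simp only [hpos, Nat.log_pow one_lt_two]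
  · intro j _ hj
    obtain ⟨i, hit, hji, hbit⟩ := dyadic_of_ne_zero hj
    simp [dyadicFill_of_eq_two_pow hit hji, hbit, hji, Nat.log_pow one_lt_two]

theorem vtSum_dyadicFill_zero (hdn : d < n + 1) (hdt : d < 2 ^ t) :
    vtSum (dyadicFill (0 : Fin n → Fin 2) t d) = d := by
  rw [vtSum_dyadicFill_zero_eq_sum_bitIndices hdn hdt, List.sum_toFinset _ Nat.bitIndices_nodup,
    Nat.sum_map_two_pow_bitIndices]

theorem mod_add_sub_mod_mod {m a : ℕ} (x : ℕ) (ha : a < m) :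
    (x + (a + m - x % m) % m) % m = a := by
  have hx : x % m < m := Nat.mod_lt _ (by omega)
  rw [Nat.add_mod_mod, ← Nat.mod_add_mod, Nat.add_sub_cancel' (by omega), Nat.add_mod_right,
    Nat.mod_eq_of_lt ha]

end DyadicFill

theorem vt_binary_systematic_dyadic_fill_general (n : ℕ)
    (t : ℕ) (ht : t = Nat.clog 2 (n + 1))
    (C' : Fin n → Fin 2)
    (hC' : ∀ i < t, ∀ h : 2 ^ i - 1 < n, C' ⟨2 ^ i - 1, h⟩ = 0)
    (a : ℕ) (ha : a ≤ n) :
    ∃ C : Fin n → Fin 2,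
      (∀ j : Fin n, (∀ i < t, j.val + 1 ≠ 2 ^ i) → C j = C' j) ∧
      (∀ i < t, ∀ h : 2 ^ i - 1 < n,
        C ⟨2 ^ i - 1, h⟩ =
          if Nat.testBit ((a + (n + 1) - synBin C') % (n + 1)) i then 1 else 0) ∧
      synBin C = a := by
  set d := (a + (n + 1) - synBin C') % (n + 1)
  have hdn : d < n + 1 := Nat.mod_lt _ n.succ_pos
  have hdt : d < 2 ^ t := hdn.trans_le (ht ▸ Nat.le_pow_clog one_lt_two _)
  refine ⟨dyadicFill C' t d, fun j hj => dyadicFill_of_forall_ne hj,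
    fun i hi h => dyadicFill_two_pow_sub_one hi h, ?_⟩
  rw [synBin_eq_vtSum_mod, vtSum_dyadicFill hC', vtSum_dyadicFill_zero hdn hdt]
  exact mod_add_sub_mod_mod _ (Nat.lt_succ_of_le ha)

theorem vt_binary_systematic_dyadic_fill (n : ℕ) (hn : 1 ≤ n)
    (t : ℕ) (ht : t = Nat.clog 2 (n + 1))
    (C' : Fin n → Fin 2)
    (hC' : ∀ i < t, ∀ h : 2 ^ i - 1 < n, C' ⟨2 ^ i - 1, h⟩ = 0)
    (a : ℕ) (ha : a ≤ n) :
    ∃ C : Fin n → Fin 2,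
      (∀ j : Fin n, (∀ i < t, j.val + 1 ≠ 2 ^ i) → C j = C' j) ∧
      (∀ i < t, ∀ h : 2 ^ i - 1 < n,
        C ⟨2 ^ i - 1, h⟩ =
          if Nat.testBit ((a + (n + 1) - synBin C') % (n + 1)) i then 1 else 0) ∧
      synBin C = a :=
  vt_binary_systematic_dyadic_fill_general n t ht C' hC' a ha
end

section
/- Let n be a positive integer and t = ⌈log₂(n+1)⌉, and for 0 ≤ j ≤ t−1 define the positions i_j = (−2^j) mod (n+1). Then for every a ∈ {0, 1, …, n} there exist binary coefficients b_0, …, b_{t−1} ∈ {0,1} such that Σ_{j=0}^{t−1} b_j · i_j ≡ a (mod n+1). In other words, the set of positions {i_0, …, i_{t−1}} can produce all syndromes. -/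
/-!
Take `m := (-a) mod (n + 1)`. Since `m ≤ n < 2 ^ t`, `m` has a binary expansion
`m = ∑_{j < t} b_j 2 ^ j`, and then `∑ b_j i_j ≡ -∑ b_j 2 ^ j = -m ≡ a (mod n + 1)`.
-/

theorem Nat.sum_range_digit_mul_pow {b m t : ℕ} (hm : m < b ^ t) :
    ∑ j ∈ Finset.range t, m / b ^ j % b * b ^ j = m := by
  induction t generalizing m with
  | zero => simp_all
  | succ t ih =>
    have hdiv : m / b < b ^ t := Nat.div_lt_of_lt_mul (by rwa [pow_succ, mul_comm] at hm)
    have hshift (j : ℕ) : m / b ^ (j + 1) % b * b ^ (j + 1) = b * (m / b / b ^ j % b * b ^ j) := by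
      rw [pow_succ', ← Nat.div_div_eq_div_mul]
      ring
    rw [Finset.sum_range_succ', Finset.sum_congr rfl fun j _ => hshift j, ← Finset.mul_sum, ih hdiv,
      pow_zero, Nat.div_one, mul_one, Nat.div_add_mod]

theorem Int.sum_mul_emod_modEq {ι : Type*} (s : Finset ι) (c x : ι → ℤ) (M : ℤ) :
    ∑ i ∈ s, c i * (x i % M) ≡ ∑ i ∈ s, c i * x i [ZMOD M] :=
  Int.ModEq.sum fun i _ => (Int.mod_modEq (x i) M).mul_left (c i)

theorem vt_negative_dyadic_positions_produce_all_syndromes_general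
    (n : ℕ) (t : ℕ) (ht : t = Nat.clog 2 (n + 1))
    (a : ℕ) (ha : a ≤ n) :
    ∃ b : Fin t → Fin 2,
      (∑ j : Fin t, ((b j : ℕ) : ℤ) * ((-(2 ^ (j : ℕ) : ℤ)) % ((n : ℤ) + 1)))
        % ((n : ℤ) + 1) = a := by
  set M : ℤ := (n : ℤ) + 1
  obtain ⟨m, hm⟩ := Int.eq_ofNat_of_zero_le (Int.emod_nonneg (-(a : ℤ)) (by omega : M ≠ 0))
  have hm_lt : m < 2 ^ t := by
    have : (m : ℤ) < M := hm ▸ Int.emod_lt_of_pos _ (by omega)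
    have : n + 1 ≤ 2 ^ t := ht ▸ Nat.le_pow_clog one_lt_two _
    omega
  refine ⟨fun j => ⟨m / 2 ^ (j : ℕ) % 2, Nat.mod_lt _ two_pos⟩, ?_⟩
  have hbits : ∑ j : Fin t, ((m / 2 ^ (j : ℕ) % 2 : ℕ) : ℤ) * 2 ^ (j : ℕ) = m := by
    rw [Fin.sum_univ_eq_sum_range (fun j => ((m / 2 ^ j % 2 : ℕ) : ℤ) * 2 ^ j)]
    exact_mod_cast Nat.sum_range_digit_mul_pow hm_lt
  have hcong : ∑ j : Fin t, ((m / 2 ^ (j : ℕ) % 2 : ℕ) : ℤ) * (-(2 ^ (j : ℕ) : ℤ) % M)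
      ≡ a [ZMOD M] :=
    calc _ ≡ ∑ j : Fin t, ((m / 2 ^ (j : ℕ) % 2 : ℕ) : ℤ) * -(2 ^ (j : ℕ) : ℤ) [ZMOD M] :=
          Int.sum_mul_emod_modEq _ _ _ M
      _ = -(m : ℤ) := by simp only [mul_neg, Finset.sum_neg_distrib, hbits]
      _ ≡ a [ZMOD M] := by
          have h := (Int.mod_modEq (-(a : ℤ)) M).neg
          rwa [neg_neg, hm] at h
  exact hcong.eq.trans (Int.emod_eq_of_lt (by omega) (by omega))

theorem vt_negative_dyadic_positions_produce_all_syndromes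
    (n : ℕ) (hn : 1 ≤ n) (t : ℕ) (ht : t = Nat.clog 2 (n + 1))
    (a : ℕ) (ha : a ≤ n) :
    ∃ b : Fin t → Fin 2,
      (∑ j : Fin t, ((b j : ℕ) : ℤ) * ((-(2 ^ (j : ℕ) : ℤ)) % ((n : ℤ) + 1)))
        % ((n : ℤ) + 1) = a :=
  vt_negative_dyadic_positions_produce_all_syndromes_general n t ht a ha
end

section
/- Let q ≥ 4 and n ≥ 6 be integers and t = ⌈log₂ n⌉. Then the number of message bits k = ⌊(n−3t+3)·log₂ q⌋ + (t−3)·⌊log₂((q−1)²)⌋ + ⌊log₂(q−1)⌋ accommodated by the systematic q-ary VT encoder satisfies k ≥ n·log₂ q − t·(log₂ q + 2) − (2·log₂ q − 4). -/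
/-!
Bounding each floor by `x - 1` is too weak by one bit. For an integer `m`, however,
`⌊log₂ m⌋ = Nat.log 2 m` and `m < 2 ^ (Nat.log 2 m + 1)`, so `log₂ (m + 1) ≤ ⌊log₂ m⌋ + 1`.
With `m = q - 1` this gives `⌊log₂ (q - 1)⌋ ≥ log₂ q - 1`, and with `m = (q - 1)²`, since
`q² ≤ 2 ((q - 1)² + 1)`, it gives `⌊log₂ ((q - 1)²)⌋ ≥ 2 log₂ q - 2`; the coefficient `t - 3` of
the latter is nonnegative because `n > 4`.
-/

open Real

theorem logb_natCast_add_one_le_floor_logb_add_one {b : ℕ} (hb : 1 < b) (m : ℕ) :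
    logb b ((m : ℝ) + 1) ≤ ⌊logb b (m : ℝ)⌋ + 1 := by
  rw [floor_logb_natCast m.cast_nonneg, Int.log_natCast, logb_le_iff_le_rpow (by exact_mod_cast hb)
    (by positivity)]
  have hpow : m + 1 ≤ b ^ (Nat.log b m + 1) := Nat.lt_pow_succ_log_self hb m
  exact_mod_cast hpow

theorem logb_two_le_floor_logb_two_sub_one_add_one {q : ℕ} (hq : 1 ≤ q) :
    logb 2 q ≤ ⌊logb 2 ((q : ℝ) - 1)⌋ + 1 := by
  have hcast : (q : ℝ) - 1 = ((q - 1 : ℕ) : ℝ) := by push_cast [hq]; ring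
  have hfloor := logb_natCast_add_one_le_floor_logb_add_one (b := 2) one_lt_two (q - 1)
  rw [← hcast, sub_add_cancel] at hfloor
  exact_mod_cast hfloor

theorem two_mul_logb_two_le_floor_logb_two_sub_one_sq_add_two {q : ℕ} (hq : 1 ≤ q) :
    2 * logb 2 q ≤ ⌊logb 2 (((q : ℝ) - 1) ^ 2)⌋ + 2 := by
  have hcast : ((q : ℝ) - 1) ^ 2 = (((q - 1) ^ 2 : ℕ) : ℝ) := by push_cast [hq]; ring
  have hfloor := logb_natCast_add_one_le_floor_logb_add_one (b := 2) one_lt_two ((q - 1) ^ 2)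
  rw [← hcast] at hfloor
  have hsq : (q : ℝ) ^ 2 ≤ 2 * (((q : ℝ) - 1) ^ 2 + 1) := by nlinarith [sq_nonneg ((q : ℝ) - 2)]
  have hq0 : (0 : ℝ) < q := by exact_mod_cast hq
  have hlog := logb_le_logb_of_le (b := 2) one_lt_two (by positivity) hsq
  rw [logb_pow, logb_mul two_ne_zero (by positivity), logb_self_eq_one one_lt_two] at hlog
  push_cast at hfloor hlog ⊢
  linarith

theorem three_le_clog_two {n : ℕ} (hn : 4 < n) : 3 ≤ Nat.clog 2 n :=
  (Nat.lt_clog_iff_pow_lt one_lt_two).mpr hn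

theorem encoder_message_bits_lower_bound (q n : ℕ) (hq : 4 ≤ q) (hn : 6 ≤ n)
    (t : ℕ) (ht : t = Nat.clog 2 n) (k : ℝ)
    (hk : k = ((⌊((n : ℝ) - 3 * t + 3) * Real.logb 2 q⌋ : ℤ) : ℝ)
        + ((t : ℝ) - 3) * ((⌊Real.logb 2 (((q : ℝ) - 1) ^ 2)⌋ : ℤ) : ℝ)
        + ((⌊Real.logb 2 ((q : ℝ) - 1)⌋ : ℤ) : ℝ)) :
    k ≥ (n : ℝ) * Real.logb 2 q - (t : ℝ) * (Real.logb 2 q + 2)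
        - (2 * Real.logb 2 q - 4) := by
  have ht3 : (3 : ℝ) ≤ t := by exact_mod_cast ht ▸ three_le_clog_two (by omega)
  have hfirst := (Int.sub_one_lt_floor (((n : ℝ) - 3 * t + 3) * logb 2 q)).le
  have hpairs := mul_le_mul_of_nonneg_left
    (two_mul_logb_two_le_floor_logb_two_sub_one_sq_add_two (by omega : 1 ≤ q))
    (sub_nonneg.mpr ht3)
  have hsingle := logb_two_le_floor_logb_two_sub_one_add_one (by omega : 1 ≤ q)
  rw [hk]
  linarith
end

section
/- For every positive integer n, the rate loss of the binary systematic VT encoder relative to the smallest binary VT code of length n is less than 1/n: that is, min_{0 ≤ a ≤ n} (1/n)·log₂|VT_a(n)| − (1 − ⌈log₂(n+1)⌉/n) < 1/n, where 1 − ⌈log₂(n+1)⌉/n is the rate of the systematic encoder. -/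
/-!
The `n + 1` codes `VT_a(n)`, `0 ≤ a ≤ n`, partition `{0,1}^n`, so the smallest one has at most
`2^n / (n + 1)` words and rate at most `1 - log₂(n + 1) / n`. The systematic encoder spends
`⌈log₂(n + 1)⌉ < log₂(n + 1) + 1` redundant bits, which loses less than one more bit.
-/

open Finset Real

theorem Nat.clog_lt_logb_add_one (b m : ℕ) : (Nat.clog b m : ℝ) < logb b m + 1 := by
  rw [← natCeil_logb_natCast]
  exact Nat.ceil_lt_add_one (div_nonneg (log_natCast_nonneg m) (log_natCast_nonneg b))

theorem Real.logb_natCast_le_logb_of_le {b y : ℝ} (hb : 1 < b) (hy : 1 ≤ y) {k : ℕ}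
    (hk : (k : ℝ) ≤ y) : logb b k ≤ logb b y := by
  rcases k.eq_zero_or_pos with rfl | hk_pos
  · simpa using logb_nonneg hb hy
  · exact logb_le_logb_of_le hb (Nat.cast_pos.mpr hk_pos) hk

theorem exists_card_VTbin_le (n : ℕ) :
    ∃ a ∈ range (n + 1), ((VTbin n a).card : ℝ) ≤ 2 ^ n / (n + 1) := by
  have hcard : ((univ : Finset (Fin n → Fin 2)).card : ℝ) ≤
      (range (n + 1)).card • (2 ^ n / (n + 1) : ℝ) := by
    rw [card_range, nsmul_eq_mul, Nat.cast_add_one, mul_div_cancel₀ _ (by positivity)]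
    simp
  exact exists_card_fiber_le_of_card_le_nsmul nonempty_range_add_one hcard

theorem logb_two_natCast_le_of_le_two_pow_div {k : ℕ} (n : ℕ)
    (h : (k : ℝ) ≤ 2 ^ n / (n + 1)) :
    logb 2 k ≤ n - logb 2 (n + 1) := by
  have hbound : (1 : ℝ) ≤ 2 ^ n / (n + 1) := by
    rw [one_le_div (by positivity)]
    exact_mod_cast Nat.lt_two_pow_self
  calc logb 2 k ≤ logb 2 (2 ^ n / (n + 1)) :=
        logb_natCast_le_logb_of_le one_lt_two hbound h
    _ = n - logb 2 (n + 1) := by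
        rw [logb_div (by positivity) (by positivity), logb_pow, logb_self_eq_one one_lt_two,
          mul_one]

theorem vt_binary_encoder_rate_loss (n : ℕ) (hn : 1 ≤ n) :
    ((Finset.range (n + 1)).inf'
        (Finset.nonempty_range_iff.mpr (Nat.succ_ne_zero n))
        fun a => Real.logb 2 ((VTbin n a).card) / n)
      - (1 - (Nat.clog 2 (n + 1) : ℝ) / n) < 1 / n := by
  obtain ⟨a, ha, hcard⟩ := exists_card_VTbin_le n
  have hnpos : (0 : ℝ) < n := by exact_mod_cast hn
  set L := logb 2 (n + 1)
  have hmin : ((range (n + 1)).inf' _ fun a => logb 2 ((VTbin n a).card) / n) ≤ (n - L) / n :=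
    (inf'_le _ ha).trans <|
      div_le_div_of_nonneg_right (logb_two_natCast_le_of_le_two_pow_div n hcard) hnpos.le
  have hclog : (Nat.clog 2 (n + 1) : ℝ) / n < (L + 1) / n := by
    gcongr
    simpa using Nat.clog_lt_logb_add_one 2 (n + 1)
  calc _ < (n - L) / n - (1 - (L + 1) / n) := by linarith
    _ = 1 / n := by field_simp; ring
end
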